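/- arXiv:2208.11452 — 7 statements merged into one kernel-verified Lean document; each statement's English description precedes it below -/
import Mathlib

section
/- Let ν be a normal weight function on [0,1), i.e., there exist 0 < a ≤ b < ∞ such that ν(s)/(1-s²)^a is almost decreasing and ν(s)/(1-s²)^b is almost increasing on [0,1). Then for all 0 < δ < 1/e², one has ∫_e^∞ e^{-δt}/(t·ν(1-1/t)) dt ≤ C/ν(1-δ), where C depends only on ν. -/
/-!
Normality compares `ν` at any two points of `[0,1)` up to a constant:
`ν y ≤ K ν s (r ^ a + r ^ b)` with `r = (1 - y²) / (1 - s²)`. For `s = 1 - 1/t` and `y = 1 - δ`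
one has `r ≤ 2δt`, so the integrand is at most `K / ν(1-δ) · δ · g(δt)` with
`g = gammaKernel a b`, `g u = e^{-u} (2^a u^{a-1} + 2^b u^{b-1})`. The substitution `u = δt` removes `δ`, and
`∫₀^∞ g = 2^a Γ(a) + 2^b Γ(b)` is finite because `0 < a ≤ b`.
-/

open MeasureTheory Set Filter

/-- `g` is almost decreasing on `s`. -/
def AlmostDecreasingOn (g : ℝ → ℝ) (s : Set ℝ) : Prop :=
  ∃ C > 0, ∀ x ∈ s, ∀ y ∈ s, x < y → g y ≤ C * g x

/-- `g` is almost increasing on `s`. -/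
def AlmostIncreasingOn (g : ℝ → ℝ) (s : Set ℝ) : Prop :=
  ∃ C > 0, ∀ x ∈ s, ∀ y ∈ s, x < y → g x ≤ C * g y

/-- `ν` is a normal weight on `[0,1)` with exponents `a ≤ b`. -/
def IsNormal (ν : ℝ → ℝ) (a b : ℝ) : Prop :=
  0 < a ∧ a ≤ b ∧ (∀ s ∈ Ico (0:ℝ) 1, 0 < ν s) ∧ ContinuousOn ν (Ico 0 1) ∧
  AlmostDecreasingOn (fun s => ν s / (1 - s ^ 2) ^ a) (Ico 0 1) ∧
  AlmostIncreasingOn (fun s => ν s / (1 - s ^ 2) ^ b) (Ico 0 1)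

/-- Membership in the normal-weight Bloch space `B_ν`. -/
def MemBloch (ν : ℝ → ℝ) (f : ℂ → ℂ) : Prop :=
  DifferentiableOn ℂ f (Metric.ball 0 1) ∧
  BddAbove (Set.range fun z : Metric.ball (0:ℂ) 1 => ν ‖(z : ℂ)‖ * ‖deriv f z‖)

/-- The Bloch norm `|f(0)| + sup ν(|z|)|f'(z)|`. -/
noncomputable def blochNorm (ν : ℝ → ℝ) (f : ℂ → ℂ) : ℝ :=
  ‖f 0‖ + ⨆ z : Metric.ball (0:ℂ) 1, ν ‖(z : ℂ)‖ * ‖deriv f z‖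

/-- `ω̃(t) = ∫_0^t ds/ω(s)`. -/
noncomputable def tildeW (ω : ℝ → ℝ) (t : ℝ) : ℝ := ∫ s in (0:ℝ)..t, 1 / ω s

/-- The generalized integral type Hilbert operator `I_{μ,α+1}`. -/
noncomputable def intHilbert (μ : Measure ℝ) (α : ℝ) (f : ℂ → ℂ) (z : ℂ) : ℂ :=
  ∫ t in Ico (0:ℝ) 1, f (t : ℂ) / (1 - (t : ℂ) * z) ^ ((α : ℂ) + 1) ∂μ

/-- The sublinear generalized integral type Hilbert operator. -/
noncomputable def tildeIntHilbert (μ : Measure ℝ) (α : ℝ) (f : ℂ → ℂ) (z : ℂ) : ℂ :=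
  ∫ t in Ico (0:ℝ) 1, (‖f (t : ℂ)‖ : ℂ) / (1 - (t : ℂ) * z) ^ ((α : ℂ) + 1) ∂μ

/-- Boundedness of an operator from `B_{ν₁}` to `B_{ν₂}`. -/
def IsBddOp (ν₁ ν₂ : ℝ → ℝ) (T : (ℂ → ℂ) → ℂ → ℂ) : Prop :=
  ∃ C > 0, ∀ f, MemBloch ν₁ f → MemBloch ν₂ (T f) ∧ blochNorm ν₂ (T f) ≤ C * blochNorm ν₁ f

/-- Compactness of an operator from `B_{ν₁}` to `B_{ν₂}` (sequential characterization). -/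
def IsCompactOp (ν₁ ν₂ : ℝ → ℝ) (T : (ℂ → ℂ) → ℂ → ℂ) : Prop :=
  IsBddOp ν₁ ν₂ T ∧
  ∀ (h : ℕ → ℂ → ℂ) (M : ℝ), (∀ k, MemBloch ν₁ (h k) ∧ blochNorm ν₁ (h k) ≤ M) →
    TendstoLocallyUniformlyOn (fun k z => h k z) (fun _ => 0) atTop (Metric.ball (0:ℂ) 1) →
    Tendsto (fun k => blochNorm ν₂ (T (h k))) atTop (nhds 0)

open Real

lemma le_mul_mul_div_rpow_of_div_rpow_le {u v p q c e : ℝ} (hp : 0 < p) (hq : 0 < q)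
    (h : u / p ^ e ≤ c * (v / q ^ e)) : u ≤ c * v * (p / q) ^ e := by
  have hpe : 0 < p ^ e := rpow_pos_of_pos hp e
  have hqe : 0 < q ^ e := rpow_pos_of_pos hq e
  rw [div_rpow hp.le hq.le, div_le_iff₀ hpe] at *
  calc u ≤ c * (v / q ^ e) * p ^ e := h
    _ = c * v * (p ^ e / q ^ e) := by ring

lemma IsNormal.exists_le_mul_rpow_add_rpow {ν : ℝ → ℝ} {a b : ℝ} (hν : IsNormal ν a b) :
    ∃ K > 0, ∀ s ∈ Ico (0:ℝ) 1, ∀ y ∈ Ico (0:ℝ) 1,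
      ν y ≤ K * ν s * (((1 - y ^ 2) / (1 - s ^ 2)) ^ a + ((1 - y ^ 2) / (1 - s ^ 2)) ^ b) := by
  obtain ⟨-, -, hpos, -, ⟨Cd, hCd, hdec⟩, ⟨Ci, hCi, hinc⟩⟩ := hν
  refine ⟨Cd + Ci + 1, by positivity, fun s hs y hy => ?_⟩
  have hws : 0 < 1 - s ^ 2 := by nlinarith [hs.1, hs.2]
  have hwy : 0 < 1 - y ^ 2 := by nlinarith [hy.1, hy.2]
  have hνs := hpos s hs
  set r := (1 - y ^ 2) / (1 - s ^ 2)
  have hra : 0 ≤ ν s * r ^ a := by positivity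
  have hrb : 0 ≤ ν s * r ^ b := by positivity
  rcases lt_trichotomy s y with hsy | rfl | hys
  · have := le_mul_mul_div_rpow_of_div_rpow_le hwy hws (hdec s hs y hy hsy)
    nlinarith
  · have hr : r = 1 := div_self hws.ne'
    simp only [hr, one_rpow]
    nlinarith
  · have := le_mul_mul_div_rpow_of_div_rpow_le hwy hws (hinc y hy s hs hys)
    nlinarith

lemma one_sub_one_div_mem_Ico {t : ℝ} (ht : 1 ≤ t) : 1 - 1 / t ∈ Ico (0:ℝ) 1 := by
  have ht0 : 0 < t := by linarith
  exact ⟨by rw [sub_nonneg, div_le_one ht0]; exact ht, by simp [ht0]⟩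

lemma one_sub_sq_div_one_sub_sq_le {δ t : ℝ} (hδ : 0 < δ) (ht : 1 ≤ t) :
    (1 - (1 - δ) ^ 2) / (1 - (1 - 1 / t) ^ 2) ≤ 2 * δ * t := by
  have ht0 : 0 < t := by linarith
  have hinv : 1 / t ≤ 1 := by rw [div_le_one ht0]; exact ht
  have hw : 1 / t ≤ 1 - (1 - 1 / t) ^ 2 := by nlinarith [one_div_pos.mpr ht0]
  rw [div_le_iff₀ (by linarith [one_div_pos.mpr ht0])]
  calc 1 - (1 - δ) ^ 2 ≤ 2 * δ * t * (1 / t) := by field_simp; nlinarith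
    _ ≤ 2 * δ * t * (1 - (1 - 1 / t) ^ 2) := by gcongr

lemma two_mul_rpow_eq {u : ℝ} (hu : 0 < u) (p : ℝ) : (2 * u) ^ p = u * (2 ^ p * u ^ (p - 1)) := by
  rw [mul_rpow zero_le_two hu.le, rpow_sub_one hu.ne']
  field_simp

noncomputable def gammaKernel (a b u : ℝ) : ℝ :=
  2 ^ a * (exp (-u) * u ^ (a - 1)) + 2 ^ b * (exp (-u) * u ^ (b - 1))

lemma integrableOn_gammaKernel {a b : ℝ} (ha : 0 < a) (hb : 0 < b) :
    IntegrableOn (gammaKernel a b) (Ioi 0) :=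
  ((GammaIntegral_convergent ha).const_mul _).add ((GammaIntegral_convergent hb).const_mul _)

lemma integral_gammaKernel {a b : ℝ} (ha : 0 < a) (hb : 0 < b) :
    ∫ u in Ioi 0, gammaKernel a b u = 2 ^ a * Gamma a + 2 ^ b * Gamma b := by
  unfold gammaKernel
  rw [integral_add ((GammaIntegral_convergent ha).const_mul _)
    ((GammaIntegral_convergent hb).const_mul _), integral_const_mul, integral_const_mul,
    Gamma_eq_integral ha, Gamma_eq_integral hb]

lemma gammaKernel_nonneg (a b : ℝ) {u : ℝ} (hu : 0 ≤ u) : 0 ≤ gammaKernel a b u := by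
  unfold gammaKernel; positivity

lemma IsNormal.exists_exp_div_le_gammaKernel {ν : ℝ → ℝ} {a b : ℝ} (hν : IsNormal ν a b) :
    ∃ K > 0, ∀ δ, 0 < δ → δ < 1 → ∀ t, 1 ≤ t →
      exp (-δ * t) / (t * ν (1 - 1 / t)) ≤ K / ν (1 - δ) * (δ * gammaKernel a b (δ * t)) := by
  obtain ⟨K, hK, hcomp⟩ := hν.exists_le_mul_rpow_add_rpow
  obtain ⟨ha, hab, hpos, -⟩ := hν
  refine ⟨K, hK, fun δ hδ hδ1 t ht => ?_⟩
  have ht0 : 0 < t := by linarith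
  have hδt : 0 < δ * t := by positivity
  have hs := one_sub_one_div_mem_Ico ht
  have hy : 1 - δ ∈ Ico (0:ℝ) 1 := ⟨by linarith, by linarith⟩
  have hνs := hpos _ hs
  have hνy := hpos _ hy
  set r := (1 - (1 - δ) ^ 2) / (1 - (1 - 1 / t) ^ 2)
  have hr0 : 0 ≤ r := div_nonneg (by nlinarith) (by nlinarith [hs.1, hs.2])
  have hr : r ≤ 2 * (δ * t) := by rw [← mul_assoc]; exact one_sub_sq_div_one_sub_sq_le hδ ht
  set P := 2 ^ a * (δ * t) ^ (a - 1) + 2 ^ b * (δ * t) ^ (b - 1)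
  have hrP : r ^ a + r ^ b ≤ δ * t * P := by
    have h₁ := rpow_le_rpow hr0 hr ha.le
    have h₂ := rpow_le_rpow hr0 hr (ha.trans_le hab).le
    rw [two_mul_rpow_eq hδt] at h₁ h₂
    linarith
  have hνy_le : ν (1 - δ) ≤ K * ν (1 - 1 / t) * (δ * t * P) :=
    (hcomp _ hs _ hy).trans (by gcongr)
  have hkernel : gammaKernel a b (δ * t) = exp (-δ * t) * P := by
    rw [gammaKernel, neg_mul]; ring
  rw [hkernel, div_le_iff₀ (by positivity)]
  calc exp (-δ * t) = exp (-δ * t) * (ν (1 - δ) / ν (1 - δ)) := by rw [div_self hνy.ne', mul_one]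
    _ ≤ exp (-δ * t) * (K * ν (1 - 1 / t) * (δ * t * P) / ν (1 - δ)) := by gcongr
    _ = _ := by ring

lemma IsNormal.exists_integral_exp_div_le {ν : ℝ → ℝ} {a b : ℝ} (hν : IsNormal ν a b) :
    ∃ C > 0, ∀ c, 1 ≤ c → ∀ δ, 0 < δ → δ < 1 →
      ∫ t in Ioi c, exp (-δ * t) / (t * ν (1 - 1 / t)) ≤ C / ν (1 - δ) := by
  obtain ⟨K, hK, hpoint⟩ := hν.exists_exp_div_le_gammaKernel
  obtain ⟨ha, hab, hpos, -⟩ := hν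
  have hb : 0 < b := ha.trans_le hab
  have hΓ : 0 < 2 ^ a * Gamma a + 2 ^ b * Gamma b := by
    have := Gamma_pos_of_pos ha; have := Gamma_pos_of_pos hb; positivity
  refine ⟨K * (2 ^ a * Gamma a + 2 ^ b * Gamma b), by positivity, fun c hc δ hδ hδ1 => ?_⟩
  have hνy : 0 < ν (1 - δ) := hpos _ ⟨by linarith, by linarith⟩
  set M := fun t => K / ν (1 - δ) * (δ * gammaKernel a b (δ * t))
  have hM : IntegrableOn M (Ioi 0) := by
    have := integrableOn_gammaKernel ha hb
    rw [← mul_zero δ, ← integrableOn_Ioi_comp_mul_left_iff _ _ hδ] at this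
    exact (this.const_mul δ).const_mul _
  have hM_nonneg : ∀ t ∈ Ioi (0:ℝ), 0 ≤ M t := fun t ht => by
    have := gammaKernel_nonneg a b (mul_pos hδ ht).le; positivity
  have hsub : Ioi c ⊆ Ioi 0 := Ioi_subset_Ioi (by linarith)
  calc ∫ t in Ioi c, exp (-δ * t) / (t * ν (1 - 1 / t))
      ≤ ∫ t in Ioi c, M t := by
        refine integral_mono_of_nonneg ?_ (hM.mono_set hsub) ?_ <;>
          filter_upwards [ae_restrict_mem measurableSet_Ioi] with t ht
        · have ht1 : 1 ≤ t := hc.trans (le_of_lt ht)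
          have := hpos _ (one_sub_one_div_mem_Ico ht1)
          have : 0 < t := by linarith
          positivity
        · exact hpoint δ hδ hδ1 t (hc.trans (le_of_lt ht))
    _ ≤ ∫ t in Ioi 0, M t :=
        setIntegral_mono_set hM ((ae_restrict_mem measurableSet_Ioi).mono hM_nonneg)
          hsub.eventuallyLE
    _ = K * (2 ^ a * Gamma a + 2 ^ b * Gamma b) / ν (1 - δ) := by
        simp only [M]
        rw [integral_const_mul, integral_const_mul, integral_comp_mul_left_Ioi _ _ hδ, mul_zero,
          integral_gammaKernel ha hb, smul_eq_mul]
        field_simp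

theorem stmt0 (ν : ℝ → ℝ) (a b : ℝ) (hν : IsNormal ν a b) :
    ∃ C > 0, ∀ δ : ℝ, 0 < δ → δ < 1 / Real.exp 2 →
      (∫ t in Ioi (Real.exp 1), Real.exp (-δ * t) / (t * ν (1 - 1 / t))) ≤ C / ν (1 - δ) := by
  obtain ⟨C, hC, hbound⟩ := hν.exists_integral_exp_div_le
  refine ⟨C, hC, fun δ hδ hδe => hbound _ (one_le_exp zero_le_one) δ hδ (hδe.trans_le ?_)⟩
  rw [div_le_one (exp_pos 2)]
  exact one_le_exp zero_le_two
end

section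
/- Let μ be a positive Borel measure on [0,1), β > 0, γ > 0, and let τ be the measure dτ(t) = dμ(t)/(1-t)^γ. Then τ is a β-Carleson measure (i.e., τ([t,1)) ≤ C(1-t)^β for all t ∈ [0,1)) if and only if μ is a (β+γ)-Carleson measure (i.e., μ([t,1)) ≤ C(1-t)^{β+γ} for all t ∈ [0,1)). -/
open MeasureTheory Set Filter

theorem stmt1 (μ : Measure ℝ) (β γ : ℝ) (hβ : 0 < β) (hγ : 0 < γ) :
    (∃ C > 0, ∀ t ∈ Ico (0:ℝ) 1,
        (∫⁻ x in Ico t 1, ENNReal.ofReal ((1 - x) ^ (-γ)) ∂μ) ≤ ENNReal.ofReal (C * (1 - t) ^ β))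
    ↔ (∃ C > 0, ∀ t ∈ Ico (0:ℝ) 1,
        μ (Ico t 1) ≤ ENNReal.ofReal (C * (1 - t) ^ (β + γ))) := by
  constructor
  · rintro ⟨C, hC, h⟩
    refine ⟨C, hC, fun t ht => ?_⟩
    obtain ⟨ht0, ht1⟩ := ht
    have hd : (0:ℝ) < 1 - t := by linarith
    have hmeas : Measurable fun x : ℝ => ENNReal.ofReal ((1 - x) ^ (-γ)) := by
      fun_prop
    have key : ENNReal.ofReal ((1-t) ^ (-γ)) * μ (Ico t 1)
        ≤ ∫⁻ x in Ico t 1, ENNReal.ofReal ((1 - x) ^ (-γ)) ∂μ := by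
      rw [← setLIntegral_const]
      refine setLIntegral_mono hmeas fun x hx => ?_
      exact ENNReal.ofReal_le_ofReal
        (Real.rpow_le_rpow_of_nonpos (by linarith [hx.2]) (by linarith [hx.1]) (by linarith))
    have h1 : ENNReal.ofReal ((1-t)^γ) * ENNReal.ofReal ((1-t)^(-γ)) = 1 := by
      rw [← ENNReal.ofReal_mul (by positivity), ← Real.rpow_add hd]
      simp
    calc μ (Ico t 1)
        = ENNReal.ofReal ((1-t)^γ) * (ENNReal.ofReal ((1-t)^(-γ)) * μ (Ico t 1)) := by
          rw [← mul_assoc, h1, one_mul]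
      _ ≤ ENNReal.ofReal ((1-t)^γ) * ENNReal.ofReal (C * (1-t)^β) := by
          gcongr
          exact key.trans (h t ⟨ht0, ht1⟩)
      _ = ENNReal.ofReal (C * (1-t)^(β+γ)) := by
          rw [← ENNReal.ofReal_mul (by positivity), Real.rpow_add hd]
          ring_nf
  · rintro ⟨C, hC, h⟩
    classical
    set q : ℝ := (1/2 : ℝ) ^ β with hq
    have hq0 : 0 < q := Real.rpow_pos_of_pos (by norm_num) β
    have hq1 : q < 1 := Real.rpow_lt_one (by norm_num) (by norm_num) hβ
    refine ⟨C * 2 ^ γ * (1 - q)⁻¹, mul_pos (mul_pos hC (Real.rpow_pos_of_pos two_pos γ)) (inv_pos.2 (by linarith)), fun t ht => ?_⟩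
    obtain ⟨ht0, ht1⟩ := ht
    have hd : (0:ℝ) < 1 - t := by linarith
    set d : ℝ := 1 - t with hdd
    set r : ℕ → ℝ := fun n => d * (1/2) ^ n with hr
    have hrpos : ∀ n, 0 < r n := fun n => by positivity
    have hrle : ∀ n, r n ≤ d := fun n => by
      calc r n ≤ d * 1 := by
            apply mul_le_mul_of_nonneg_left _ hd.le
            exact pow_le_one₀ (by norm_num) (by norm_num)
        _ = d := mul_one d
    have hrsucc : ∀ n, r (n+1) = r n * (1/2) := fun n => by
      simp only [hr, pow_succ]; ring
    set A : ℕ → Set ℝ := fun n => Ico (1 - r n) (1 - r (n+1)) with hA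
    have hUnion : (⋃ n, A n) = Ico t 1 := by
      ext x
      simp only [mem_iUnion, hA, mem_Ico]
      constructor
      · rintro ⟨n, h1, h2⟩
        refine ⟨?_, ?_⟩
        · have := hrle n; linarith
        · have := hrpos (n+1); linarith
      · rintro ⟨hx1, hx2⟩
        have hx : (0:ℝ) < 1 - x := by linarith
        have hev : ∃ n, r n < 1 - x := by
          obtain ⟨n, hn⟩ := exists_pow_lt_of_lt_one (div_pos hx hd) (by norm_num : (1/2:ℝ) < 1)
          refine ⟨n, ?_⟩
          have := (lt_div_iff₀ hd).mp hn
          calc r n = d * (1/2)^n := rfl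
            _ = (1/2)^n * d := by ring
            _ < 1 - x := this
        set n₀ := Nat.find hev with hn₀
        have hPn₀ : r n₀ < 1 - x := Nat.find_spec hev
        have hn₀ne : n₀ ≠ 0 := by
          intro h0
          have : r 0 = d := by simp [hr]
          rw [h0] at hPn₀
          rw [this] at hPn₀
          linarith
        obtain ⟨m, hm⟩ := Nat.exists_eq_succ_of_ne_zero hn₀ne
        have hnot : ¬ (r m < 1 - x) := Nat.find_min hev (by omega)
        have hP' : r (m+1) < 1 - x := by rw [show m + 1 = n₀ from by omega]; exact hPn₀
        refine ⟨m, by push_neg at hnot; linarith, by linarith⟩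
    have hdisj : Pairwise (Function.onFun Disjoint A) := by
      have hkey : ∀ m n : ℕ, m < n → Disjoint (A m) (A n) := by
        intro m n hlt
        refine Set.disjoint_left.2 fun x hxm hxn => ?_
        have h1 : x < 1 - r (m+1) := hxm.2
        have h2 : 1 - r n ≤ x := hxn.1
        have : r n ≤ r (m+1) := by
          apply mul_le_mul_of_nonneg_left _ hd.le
          exact pow_le_pow_of_le_one (by norm_num) (by norm_num) (by omega)
        linarith
      intro m n hmn
      rcases lt_or_gt_of_ne hmn with hlt | hlt
      · exact hkey m n hlt
      · exact (hkey n m hlt).symm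
    have hterm : ∀ n : ℕ, (∫⁻ x in A n, ENNReal.ofReal ((1 - x) ^ (-γ)) ∂μ)
        ≤ ENNReal.ofReal (C * 2^γ * d^β * q^n) := by
      intro n
      have ha := hrpos n
      have ha1 := hrpos (n+1)
      have step1 : (∫⁻ x in A n, ENNReal.ofReal ((1 - x) ^ (-γ)) ∂μ)
          ≤ ENNReal.ofReal ((r (n+1))^(-γ)) * μ (A n) := by
        rw [← setLIntegral_const]
        refine setLIntegral_mono measurable_const fun x hx => ?_
        exact ENNReal.ofReal_le_ofReal
          (Real.rpow_le_rpow_of_nonpos ha1 (by linarith [hx.2]) (by linarith))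
      have step2 : μ (A n) ≤ ENNReal.ofReal (C * (r n)^(β+γ)) := by
        have hsub : A n ⊆ Ico (1 - r n) 1 := Ico_subset_Ico le_rfl (by linarith)
        have hmem : (1 - r n) ∈ Ico (0:ℝ) 1 := ⟨by have := hrle n; simp only [hdd] at *; linarith, by linarith⟩
        have := h (1 - r n) hmem
        rw [sub_sub_cancel] at this
        exact (measure_mono hsub).trans this
      have heq : (r (n+1))^(-γ) * (C * (r n)^(β+γ)) = C * 2^γ * d^β * q^n := by
        have hab : (r n) ^ β = d ^ β * q ^ n := by
          show (d * (1/2)^n) ^ β = d ^ β * q ^ n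
          rw [Real.mul_rpow hd.le (by positivity), ← Real.rpow_natCast (1/2:ℝ) n,
            ← Real.rpow_mul (by norm_num), mul_comm (n:ℝ) β, Real.rpow_mul (by norm_num),
            Real.rpow_natCast]
        have hinv : ((1/2:ℝ))^(-γ) = 2^γ := by
          rw [Real.rpow_neg (by norm_num), one_div, Real.inv_rpow (by norm_num), inv_inv]
        have hcancel : (r n)^(-γ) * (r n)^γ = 1 := by
          rw [← Real.rpow_add ha]; simp
        rw [hrsucc n, Real.mul_rpow ha.le (by norm_num), hinv, Real.rpow_add ha, hab]
        linear_combination (C * 2^γ * (d^β * q^n)) * hcancel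
      calc (∫⁻ x in A n, ENNReal.ofReal ((1 - x) ^ (-γ)) ∂μ)
          ≤ ENNReal.ofReal ((r (n+1))^(-γ)) * ENNReal.ofReal (C * (r n)^(β+γ)) := by
            exact step1.trans (by gcongr)
        _ = ENNReal.ofReal ((r (n+1))^(-γ) * (C * (r n)^(β+γ))) := by
            rw [← ENNReal.ofReal_mul (by positivity)]
        _ = ENNReal.ofReal (C * 2^γ * d^β * q^n) := by rw [heq]
    calc (∫⁻ x in Ico t 1, ENNReal.ofReal ((1 - x) ^ (-γ)) ∂μ)
        = ∑' (n : ℕ), (∫⁻ x in A n, ENNReal.ofReal ((1 - x) ^ (-γ)) ∂μ) := by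
          rw [← hUnion, lintegral_iUnion (fun n => measurableSet_Ico) hdisj]
      _ ≤ ∑' n, ENNReal.ofReal (C * 2^γ * d^β * q^n) := ENNReal.tsum_le_tsum hterm
      _ = ∑' n, ENNReal.ofReal (C * 2^γ * d^β) * ENNReal.ofReal q ^ n := by
          congr 1
          funext n
          rw [← ENNReal.ofReal_pow hq0.le, ← ENNReal.ofReal_mul (by positivity)]
      _ = ENNReal.ofReal (C * 2^γ * d^β) * (1 - ENNReal.ofReal q)⁻¹ := by
          rw [ENNReal.tsum_mul_left, ENNReal.tsum_geometric]
      _ = ENNReal.ofReal (C * 2 ^ γ * (1 - q)⁻¹ * d ^ β) := by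
          have h1 : (1 : ENNReal) - ENNReal.ofReal q = ENNReal.ofReal (1 - q) := by
            rw [← ENNReal.ofReal_one, ← ENNReal.ofReal_sub _ hq0.le]
          rw [h1, ← ENNReal.ofReal_inv_of_pos (by linarith), ← ENNReal.ofReal_mul (by positivity)]
          ring_nf
end

section
/- Let ν be a normal weight on [0,1) with exponents a ≤ b. Then for all r with 1/2 ≤ r < 1, the sum ∑_{j=0}^∞ r^{2^j}/ν(1-2^{-j}) ≤ C/ν(r), where C depends only on ν. -/
open MeasureTheory Set Filter

/-!
Write `t_j = 1 - 2^{-j}` and `x_j = 2^j (1 - r) = (1 - r) / (1 - t_j)`. Comparing `ν` with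
`(1 - s²)^a` and `(1 - s²)^b` gives `ν r / ν t_j ≲ x_j^a` when `t_j ≤ r` (i.e. `x_j ≤ 1`) and
`ν r / ν t_j ≲ x_j^b` when `r ≤ t_j`, while `r^{2^j} ≤ e^{-x_j}` and `x^b e^{-x} ≲ x^{-a}` for
`x ≥ 1`. Hence the `j`-th term of `ν r · ∑_j r^{2^j} / ν t_j` is `≲ min (x_j^a, x_j^{-a})`, and since
`x_j` doubles with `j`, these are bounded by two geometric series with ratio `2^{-a}` running away
from the index `m` where `x_m ≈ 1`; the bound does not depend on `m`, i.e. on `r`.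
-/

open scoped Nat

lemma pow_le_exp_neg_mul_one_sub {r : ℝ} (hr : 0 ≤ r) (n : ℕ) :
    r ^ n ≤ Real.exp (-(n * (1 - r))) := by
  calc r ^ n ≤ Real.exp (-(1 - r)) ^ n := by
        gcongr
        linarith [Real.add_one_le_exp (-(1 - r))]
    _ = Real.exp (-(n * (1 - r))) := by rw [← Real.exp_nat_mul, mul_neg]

lemma rpow_mul_exp_neg_le {x a b : ℝ} {N : ℕ} (hx : 1 ≤ x) (hN : a + b ≤ N) :
    x ^ b * Real.exp (-x) ≤ N ! * x ^ (-a) := by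
  have hx₀ : 0 < x := one_pos.trans_le hx
  have hpow : x ^ (a + b) ≤ N ! * Real.exp x :=
    calc x ^ (a + b) ≤ x ^ (N : ℝ) := Real.rpow_le_rpow_of_exponent_le hx hN
      _ ≤ N ! * Real.exp x := by
          rw [Real.rpow_natCast, ← div_le_iff₀' (by positivity)]
          exact Real.pow_div_factorial_le_exp x hx₀.le N
  rw [Real.rpow_neg hx₀.le, Real.exp_neg, ← div_eq_mul_inv, ← div_eq_mul_inv,
    div_le_div_iff₀ (Real.exp_pos x) (Real.rpow_pos_of_pos hx₀ a),
    ← Real.rpow_add hx₀, add_comm]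
  exact hpow

open Finset in
lemma summable_and_tsum_le_of_le_geometric_around {f : ℕ → ℝ} {M q : ℝ} (m : ℕ)
    (hf : ∀ j, 0 ≤ f j) (hq₀ : 0 ≤ q) (hq₁ : q < 1) (hhead : ∀ j ≤ m, f j ≤ M * q ^ (m - j))
    (htail : ∀ k, f (k + (m + 1)) ≤ M * q ^ k) :
    Summable f ∧ ∑' j, f j ≤ 2 * M * (1 - q)⁻¹ := by
  have hM : 0 ≤ M := by simpa using (hf m).trans (hhead m le_rfl)
  have hgeom := summable_geometric_of_lt_one hq₀ hq₁
  have htail_summable : Summable fun k ↦ f (k + (m + 1)) :=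
    (hgeom.mul_left M).of_nonneg_of_le (fun k ↦ hf _) htail
  have hsummable := (summable_nat_add_iff (m + 1)).1 htail_summable
  have hhead_sum : ∑ j ∈ range (m + 1), f j ≤ M * (1 - q)⁻¹ :=
    calc ∑ j ∈ range (m + 1), f j ≤ ∑ j ∈ range (m + 1), M * q ^ (m - j) :=
          sum_le_sum fun j hj ↦ hhead j (Nat.lt_succ_iff.1 (mem_range.1 hj))
      _ = M * ∑ j ∈ range (m + 1), q ^ j := by
          rw [← mul_sum, ← sum_range_reflect (fun j ↦ q ^ j), Nat.add_sub_cancel]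
      _ ≤ M * (1 - q)⁻¹ := by
          rw [← tsum_geometric_of_lt_one hq₀ hq₁]
          gcongr
          exact hgeom.sum_le_tsum _ fun i _ ↦ pow_nonneg hq₀ i
  have htail_sum : ∑' k, f (k + (m + 1)) ≤ M * (1 - q)⁻¹ :=
    calc ∑' k, f (k + (m + 1)) ≤ ∑' k, M * q ^ k :=
          htail_summable.tsum_le_tsum htail (hgeom.mul_left M)
      _ = M * (1 - q)⁻¹ := by rw [tsum_mul_left, tsum_geometric_of_lt_one hq₀ hq₁]
  refine ⟨hsummable, ?_⟩
  rw [← hsummable.sum_add_tsum_nat_add (m + 1)]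
  linarith

lemma summable_and_tsum_le_of_dyadic_bound {f : ℕ → ℝ} {u M c : ℝ} (hu₀ : 0 < u) (hu₁ : u ≤ 1)
    (hc : 0 < c) (hf : ∀ j, 0 ≤ f j)
    (hsmall : ∀ j : ℕ, 2 ^ j * u ≤ 1 → f j ≤ M * (2 ^ j * u) ^ c)
    (hlarge : ∀ j : ℕ, 1 < 2 ^ j * u → f j ≤ M * (2 ^ j * u) ^ (-c)) :
    Summable f ∧ ∑' j, f j ≤ 2 * M * (1 - (2 ^ c)⁻¹)⁻¹ := by
  obtain ⟨m, hm₁, hm₂⟩ := exists_nat_pow_near ((one_le_inv₀ hu₀).2 hu₁) (one_lt_two (α := ℝ))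
  rw [← one_div, le_div_iff₀ hu₀] at hm₁
  rw [← one_div, div_lt_iff₀ hu₀] at hm₂
  have h2c : 1 < (2 : ℝ) ^ c := Real.one_lt_rpow one_lt_two hc
  have hM : 0 ≤ M := by
    have := (hf m).trans (hsmall m hm₁)
    exact nonneg_of_mul_nonneg_left this (by positivity)
  refine summable_and_tsum_le_of_le_geometric_around m hf (by positivity)
    (inv_lt_one_of_one_lt₀ h2c) (fun j hj ↦ ?_) (fun k ↦ ?_)
  · have hsplit : (2 : ℝ) ^ j * u * 2 ^ (m - j) = 2 ^ m * u := by
      rw [mul_right_comm, ← pow_add, Nat.add_sub_cancel' hj]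
    have hx : (2 : ℝ) ^ j * u ≤ (2 ^ (m - j))⁻¹ := by
      rw [← one_div, le_div_iff₀ (by positivity), hsplit]
      exact hm₁
    calc f j ≤ M * (2 ^ j * u) ^ c :=
          hsmall j (hx.trans (inv_le_one_of_one_le₀ (one_le_pow₀ one_le_two)))
      _ ≤ M * ((2 ^ (m - j))⁻¹) ^ c := by gcongr
      _ = M * ((2 : ℝ) ^ c)⁻¹ ^ (m - j) := by
          rw [Real.inv_rpow (by positivity), ← Real.rpow_pow_comm zero_le_two, inv_pow]
  · have hx : (2 : ℝ) ^ k < 2 ^ (k + (m + 1)) * u := by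
      rw [pow_add, mul_assoc]
      exact lt_mul_of_one_lt_right (by positivity) hm₂
    calc f (k + (m + 1)) ≤ M * (2 ^ (k + (m + 1)) * u) ^ (-c) :=
          hlarge _ ((one_le_pow₀ one_le_two).trans_lt hx)
      _ ≤ M * ((2 : ℝ) ^ k) ^ (-c) :=
          mul_le_mul_of_nonneg_left
            (Real.rpow_le_rpow_of_nonpos (by positivity) hx.le (neg_nonpos.2 hc.le)) hM
      _ = M * ((2 : ℝ) ^ c)⁻¹ ^ k := by
          rw [Real.rpow_neg (by positivity), ← Real.rpow_pow_comm zero_le_two, inv_pow]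

lemma one_sub_two_rpow_neg_natCast_mem_Ico (j : ℕ) :
    1 - (2 : ℝ) ^ (-(j : ℝ)) ∈ Ico (0 : ℝ) 1 := by
  have h₀ : 0 < (2 : ℝ) ^ (-(j : ℝ)) := by positivity
  have h₁ : (2 : ℝ) ^ (-(j : ℝ)) ≤ 1 :=
    Real.rpow_le_one_of_one_le_of_nonpos one_le_two (neg_nonpos.2 (Nat.cast_nonneg j))
  constructor <;> linarith

lemma le_mul_rpow_of_div_rpow_le {x y p q e C : ℝ} (hp : p ∈ Ico (0 : ℝ) 1)
    (hq : q ∈ Ico (0 : ℝ) 1) (he : 0 ≤ e) (hC : 0 ≤ C) (hy : 0 ≤ y)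
    (h : x / (1 - p ^ 2) ^ e ≤ C * (y / (1 - q ^ 2) ^ e)) :
    x ≤ C * 2 ^ e * ((1 - p) / (1 - q)) ^ e * y := by
  obtain ⟨hp₀, hp₁⟩ := hp
  obtain ⟨hq₀, hq₁⟩ := hq
  have hp2 : 0 < 1 - p ^ 2 := by nlinarith
  have hq2 : 0 < 1 - q ^ 2 := by nlinarith
  have hratio : (1 - p ^ 2) / (1 - q ^ 2) ≤ 2 * (1 - p) / (1 - q) := by
    rw [div_le_div_iff₀ hq2 (by linarith)]
    nlinarith [mul_nonneg (mul_nonneg (sub_nonneg.2 hp₁.le) (sub_nonneg.2 hq₁.le))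
      (by linarith : 0 ≤ 1 - p + 2 * q)]
  rw [div_le_iff₀ (Real.rpow_pos_of_pos hp2 e)] at h
  calc x ≤ C * y * ((1 - p ^ 2) / (1 - q ^ 2)) ^ e := by
        rw [Real.div_rpow hp2.le hq2.le]
        exact h.trans_eq (by ring)
    _ ≤ C * y * (2 * (1 - p) / (1 - q)) ^ e := by gcongr
    _ = C * 2 ^ e * ((1 - p) / (1 - q)) ^ e * y := by
        rw [mul_div_assoc, Real.mul_rpow zero_le_two (div_nonneg (by linarith) (by linarith))]
        ring

lemma IsNormal.exists_weight_le {ν : ℝ → ℝ} {a b : ℝ} (hν : IsNormal ν a b) :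
    ∃ K > 0, ∀ r ∈ Ico (0 : ℝ) 1, ∀ t ∈ Ico (0 : ℝ) 1,
      (t ≤ r → ν r ≤ K * ((1 - r) / (1 - t)) ^ a * ν t) ∧
      (r ≤ t → ν r ≤ K * ((1 - r) / (1 - t)) ^ b * ν t) := by
  obtain ⟨ha, hab, hpos, -, ⟨C₁, hC₁, hdec⟩, ⟨C₂, hC₂, hinc⟩⟩ := hν
  set K := max 1 (max (C₁ * 2 ^ a) (C₂ * 2 ^ b))
  refine ⟨K, by positivity, fun r hr t ht ↦ ?_⟩
  have hquot : 0 ≤ (1 - r) / (1 - t) := div_nonneg (by linarith [hr.2]) (by linarith [ht.2])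
  have hK : ∀ {C e : ℝ}, C ≤ K →
      C * ((1 - r) / (1 - t)) ^ e * ν t ≤ K * ((1 - r) / (1 - t)) ^ e * ν t :=
    fun hCK ↦ mul_le_mul_of_nonneg_right
      (mul_le_mul_of_nonneg_right hCK (Real.rpow_nonneg hquot _)) (hpos t ht).le
  have hrefl : ∀ e : ℝ, r = t → ν r ≤ K * ((1 - r) / (1 - t)) ^ e * ν t := by
    rintro e rfl
    rw [div_self (by linarith [hr.2]), Real.one_rpow, mul_one]
    exact le_mul_of_one_le_left (hpos r hr).le (le_max_left _ _)
  refine ⟨fun htr ↦ ?_, fun hrt ↦ ?_⟩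
  · rcases htr.eq_or_lt with htr | htr
    · exact hrefl a htr.symm
    exact (le_mul_rpow_of_div_rpow_le hr ht ha.le hC₁.le (hpos t ht).le
      (hdec t ht r hr htr)).trans (hK (le_max_of_le_right (le_max_left _ _)))
  · rcases hrt.eq_or_lt with hrt | hrt
    · exact hrefl b hrt
    exact (le_mul_rpow_of_div_rpow_le hr ht (ha.le.trans hab) hC₂.le (hpos t ht).le
      (hinc r hr t ht hrt)).trans (hK (le_max_of_le_right (le_max_right _ _)))

lemma IsNormal.exists_dyadic_weight_ratio_le {ν : ℝ → ℝ} {a b : ℝ} (hν : IsNormal ν a b) :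
    ∃ K > 0, ∀ r ∈ Ico (0 : ℝ) 1, ∀ j : ℕ,
      (2 ^ j * (1 - r) ≤ 1 → ν r / ν (1 - (2 : ℝ) ^ (-(j : ℝ))) ≤ K * (2 ^ j * (1 - r)) ^ a) ∧
      (1 < 2 ^ j * (1 - r) → ν r / ν (1 - (2 : ℝ) ^ (-(j : ℝ))) ≤ K * (2 ^ j * (1 - r)) ^ b) := by
  obtain ⟨K, hK, hweight⟩ := hν.exists_weight_le
  refine ⟨K, hK, fun r hr j ↦ ?_⟩
  set t := 1 - (2 : ℝ) ^ (-(j : ℝ))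
  have ht : t ∈ Ico (0 : ℝ) 1 := one_sub_two_rpow_neg_natCast_mem_Ico j
  have h1t : 0 < 1 - t := by linarith [ht.2]
  have hx : (1 - r) / (1 - t) = 2 ^ j * (1 - r) := by
    rw [sub_sub_cancel, Real.rpow_neg zero_le_two, Real.rpow_natCast, div_inv_eq_mul, mul_comm]
  have hνt : 0 < ν t := hν.2.2.1 t ht
  rw [div_le_iff₀ hνt, div_le_iff₀ hνt, ← hx]
  refine ⟨fun hx₁ ↦ (hweight r hr t ht).1 ?_, fun hx₁ ↦ (hweight r hr t ht).2 ?_⟩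
  · linarith [(div_le_one h1t).1 hx₁]
  · linarith [(one_lt_div h1t).1 hx₁]

lemma IsNormal.exists_term_le {ν : ℝ → ℝ} {a b : ℝ} (hν : IsNormal ν a b) :
    ∃ M > 0, ∀ r ∈ Ico (0 : ℝ) 1, ∀ j : ℕ,
      (2 ^ j * (1 - r) ≤ 1 →
        r ^ (2 ^ j) / ν (1 - (2 : ℝ) ^ (-(j : ℝ))) * ν r ≤ M * (2 ^ j * (1 - r)) ^ a) ∧
      (1 < 2 ^ j * (1 - r) →
        r ^ (2 ^ j) / ν (1 - (2 : ℝ) ^ (-(j : ℝ))) * ν r ≤ M * (2 ^ j * (1 - r)) ^ (-a)) := by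
  obtain ⟨K, hK, hratio⟩ := hν.exists_dyadic_weight_ratio_le
  obtain ⟨-, -, hpos, -⟩ := hν
  obtain ⟨N, hN⟩ := exists_nat_ge (a + b)
  refine ⟨N ! * K, by positivity, fun r hr j ↦ ?_⟩
  set t := 1 - (2 : ℝ) ^ (-(j : ℝ))
  set x := (2 : ℝ) ^ j * (1 - r)
  have hx₀ : 0 ≤ x := mul_nonneg (by positivity) (sub_nonneg.2 hr.2.le)
  have hquot : 0 ≤ ν r / ν t :=
    div_nonneg (hpos r hr).le (hpos t (one_sub_two_rpow_neg_natCast_mem_Ico j)).le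
  have hterm : r ^ (2 ^ j) / ν t * ν r = r ^ (2 ^ j) * (ν r / ν t) := by ring
  refine ⟨fun hx₁ ↦ ?_, fun hx₁ ↦ ?_⟩
  · calc r ^ (2 ^ j) / ν t * ν r ≤ 1 * (K * x ^ a) := by
          rw [hterm]
          exact mul_le_mul (pow_le_one₀ hr.1 hr.2.le) ((hratio r hr j).1 hx₁) hquot zero_le_one
      _ ≤ N ! * K * x ^ a := by
          rw [mul_assoc]
          exact mul_le_mul_of_nonneg_right (Nat.one_le_cast.2 N.factorial_pos)
            (mul_nonneg hK.le (Real.rpow_nonneg hx₀ a))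
  · have hpow : r ^ (2 ^ j) ≤ Real.exp (-x) := by
      simpa [x] using pow_le_exp_neg_mul_one_sub hr.1 (2 ^ j)
    calc r ^ (2 ^ j) / ν t * ν r ≤ Real.exp (-x) * (K * x ^ b) := by
          rw [hterm]
          exact mul_le_mul hpow ((hratio r hr j).2 hx₁) hquot (Real.exp_pos _).le
      _ = K * (x ^ b * Real.exp (-x)) := by ring
      _ ≤ K * (N ! * x ^ (-a)) :=
          mul_le_mul_of_nonneg_left (rpow_mul_exp_neg_le hx₁.le hN) hK.le
      _ = N ! * K * x ^ (-a) := by ring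

theorem stmt4 (ν : ℝ → ℝ) (a b : ℝ) (hν : IsNormal ν a b) :
    ∃ C > 0, ∀ r : ℝ, 1 / 2 ≤ r → r < 1 →
      (∑' j : ℕ, r ^ (2 ^ j) / ν (1 - (2:ℝ) ^ (-(j:ℝ)))) ≤ C / ν r := by
  obtain ⟨M, hM, hterm⟩ := hν.exists_term_le
  obtain ⟨ha, -, hpos, -⟩ := hν
  have hq : 0 < 1 - ((2 : ℝ) ^ a)⁻¹ :=
    sub_pos.2 (inv_lt_one_of_one_lt₀ (Real.one_lt_rpow one_lt_two ha))
  refine ⟨2 * M * (1 - (2 ^ a)⁻¹)⁻¹, by positivity, fun r hr₁ hr₂ ↦ ?_⟩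
  have hr : r ∈ Ico (0 : ℝ) 1 := ⟨by linarith, hr₂⟩
  have hνr := hpos r hr
  rw [le_div_iff₀ hνr, ← tsum_mul_right]
  refine (summable_and_tsum_le_of_dyadic_bound (by linarith) (by linarith) ha (fun j ↦ ?_)
    (fun j ↦ (hterm r hr j).1) (fun j ↦ (hterm r hr j).2)).2
  exact mul_nonneg (div_nonneg (pow_nonneg hr.1 _)
    (hpos _ (one_sub_two_rpow_neg_natCast_mem_Ico j)).le) hνr.le
end

section
/- Let ν be a normal weight on [0,1) and let f(z) = ∑_{n≥0} a_n z^n be analytic on the unit disk with a_n ≥ 0 for all n. Then f belongs to the normal weight Bloch space B_ν (i.e., sup_{z∈D} ν(|z|)|f'(z)| < ∞) if and only if sup_{n≥1} ν(1-1/n) ∑_{k=1}^n k a_k < ∞. Moreover, ‖f‖_{B_ν} is comparable to a_0 + sup_{n≥1} ν(1-1/n) ∑_{k=1}^n k a_k. -/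
open MeasureTheory Set Filter

/-!
Write `f'(z) = ∑ dₙ zⁿ` with `dₙ = (n+1) c_{n+1} ≥ 0` and `Tₙ = d₀ + ⋯ + d_{n-1} = ∑_{k=1}^n k c_k`.
Since the coefficients are nonnegative, `|f'(z)| ≤ f'(|z|)`, so only real radii `r ∈ [0,1)` matter.

* At `r = 1 - 1/(n+1)` one has `f'(r) ≥ rⁿ T_{n+1} ≥ e⁻¹ T_{n+1}`.
* Conversely, let `M` bound `ν(1 - 1/n) Tₙ`. Abel summation gives `f'(r) = (1-r) ∑ T_{n+1} rⁿ`.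
  Normality of `ν` yields `ν(r) ≤ K ν(s) (1 + ((1-r)/(1-s))^q)` with `q = ⌈b⌉`; at
  `s = 1 - 1/(n+1)` this bounds `ν(r) T_{n+1}` by `K M (1 + ((n+1)(1-r))^q)`, and
  `(1-r) ∑ (1 + ((n+1)(1-r))^q) rⁿ ≤ 1 + q!` uniformly in `r`.
-/

open Finset

theorem summable_succ_mul_norm_coeff_mul_pow {a : ℕ → ℂ} {w : ℂ}
    (hw : Summable fun n => a n * w ^ n) {r : ℝ} (hr : 0 ≤ r) (hrw : r < ‖w‖) :
    Summable fun n : ℕ => ((n : ℝ) + 1) * ‖a (n + 1)‖ * r ^ n := by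
  obtain ⟨B, hB⟩ := (hw.tendsto_atTop_zero.norm.bddAbove_range)
  have hw0 : 0 < ‖w‖ := hr.trans_lt hrw
  have hgeom : Summable fun n : ℕ => ((n : ℝ) + 1) * (r / ‖w‖) ^ n := by
    have hq : ‖r / ‖w‖‖ < 1 := by
      rwa [Real.norm_of_nonneg (by positivity), div_lt_one hw0]
    simpa [add_mul] using (summable_pow_mul_geometric_of_norm_lt_one 1 hq).add
      (summable_geometric_of_norm_lt_one hq)
  refine .of_nonneg_of_le (fun n => by positivity) (fun n => ?_) (hgeom.mul_left (B / ‖w‖))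
  have hn : ‖a (n + 1)‖ * ‖w‖ ^ (n + 1) ≤ B := by
    simpa [norm_mul, norm_pow] using hB ⟨n + 1, rfl⟩
  calc ((n : ℝ) + 1) * ‖a (n + 1)‖ * r ^ n
      = (‖a (n + 1)‖ * ‖w‖ ^ (n + 1)) / ‖w‖ * (((n : ℝ) + 1) * (r / ‖w‖) ^ n) := by
        rw [div_pow, pow_succ]
        field_simp
    _ ≤ B / ‖w‖ * (((n : ℝ) + 1) * (r / ‖w‖) ^ n) := by gcongr

theorem hasDerivAt_of_hasSum_pow {a : ℕ → ℂ} {f : ℂ → ℂ} {R : ℝ}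
    (hf : ∀ z ∈ Metric.ball (0 : ℂ) R, HasSum (fun n => a n * z ^ n) (f z))
    {z : ℂ} (hz : z ∈ Metric.ball (0 : ℂ) R) :
    HasDerivAt f (∑' n : ℕ, ((n : ℂ) + 1) * a (n + 1) * z ^ n) z := by
  rw [mem_ball_zero_iff] at hz
  obtain ⟨ρ, hzρ, hρR⟩ := exists_between hz
  obtain ⟨s, hρs, hsR⟩ := exists_between hρR
  have hρ : 0 < ρ := (norm_nonneg z).trans_lt hzρ
  have hs : (s : ℂ) ∈ Metric.ball (0 : ℂ) R := by
    rwa [mem_ball_zero_iff, Complex.norm_real, Real.norm_of_nonneg (by linarith)]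
  have htail : ∀ y ∈ Metric.ball (0 : ℂ) R,
      f y = a 0 + ∑' n : ℕ, a (n + 1) * y ^ (n + 1) := fun y hy => by
    rw [(hf y hy).tsum_eq.symm, (hf y hy).summable.tsum_eq_zero_add]
    simp
  have hderiv := hasDerivAt_tsum_of_isPreconnected
      (g := fun (n : ℕ) (y : ℂ) => a (n + 1) * y ^ (n + 1))
      (g' := fun (n : ℕ) (y : ℂ) => ((n : ℂ) + 1) * a (n + 1) * y ^ n)
      (u := fun n : ℕ => ((n : ℝ) + 1) * ‖a (n + 1)‖ * ρ ^ n) (y₀ := 0)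
      (summable_succ_mul_norm_coeff_mul_pow (hf _ hs).summable hρ.le
        (by rwa [Complex.norm_real, Real.norm_of_nonneg (by linarith)]))
      Metric.isOpen_ball (convex_ball 0 ρ).isPreconnected
      (fun n y _ =>
        ((hasDerivAt_pow (n + 1) y).const_mul (a (n + 1))).congr_deriv (by push_cast; ring))
      (fun n y hy => by
        rw [mem_ball_zero_iff] at hy
        simp only [norm_mul, norm_pow]
        gcongr
        exact (norm_add_le _ _).trans (by simp))
      (Metric.mem_ball_self hρ)
      (by simp) (by rwa [mem_ball_zero_iff])
  refine (hderiv.const_add (a 0)).congr_of_eventuallyEq ?_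
  filter_upwards [Metric.isOpen_ball.mem_nhds (mem_ball_zero_iff.mpr hz)] with y hy
  exact htail y hy

section NonnegCoeff

variable {f : ℂ → ℂ} {c : ℕ → ℝ}

theorem summable_succ_mul_coeff_mul_pow (hc : ∀ n, 0 ≤ c n)
    (hf : ∀ z ∈ Metric.ball (0 : ℂ) 1, HasSum (fun n => (c n : ℂ) * z ^ n) (f z))
    {r : ℝ} (hr0 : 0 ≤ r) (hr1 : r < 1) :
    Summable fun n : ℕ => ((n : ℝ) + 1) * c (n + 1) * r ^ n := by
  have hw : (((1 + r) / 2 : ℝ) : ℂ) ∈ Metric.ball (0 : ℂ) 1 := by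
    rw [mem_ball_zero_iff, Complex.norm_real, Real.norm_of_nonneg (by positivity)]
    linarith
  simpa [Real.norm_of_nonneg (hc _)] using summable_succ_mul_norm_coeff_mul_pow (hf _ hw).summable
    hr0 (by rw [Complex.norm_real, Real.norm_of_nonneg (by positivity)]; linarith)

theorem norm_deriv_le_tsum (hc : ∀ n, 0 ≤ c n)
    (hf : ∀ z ∈ Metric.ball (0 : ℂ) 1, HasSum (fun n => (c n : ℂ) * z ^ n) (f z))
    {z : ℂ} (hz : z ∈ Metric.ball (0 : ℂ) 1) :
    ‖deriv f z‖ ≤ ∑' n : ℕ, ((n : ℝ) + 1) * c (n + 1) * ‖z‖ ^ n := by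
  have hnorm : ∀ n : ℕ, ‖((n : ℂ) + 1) * c (n + 1) * z ^ n‖ = ((n : ℝ) + 1) * c (n + 1) * ‖z‖ ^ n :=
    fun n => by
      rw [norm_mul, norm_mul, norm_pow, Complex.norm_real, Real.norm_of_nonneg (hc _)]
      norm_cast
  rw [(hasDerivAt_of_hasSum_pow hf hz).deriv, ← tsum_congr hnorm]
  refine norm_tsum_le_tsum_norm ?_
  simpa only [hnorm] using
    summable_succ_mul_coeff_mul_pow hc hf (norm_nonneg z) (mem_ball_zero_iff.mp hz)

theorem norm_deriv_ofReal (hc : ∀ n, 0 ≤ c n)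
    (hf : ∀ z ∈ Metric.ball (0 : ℂ) 1, HasSum (fun n => (c n : ℂ) * z ^ n) (f z))
    {r : ℝ} (hr0 : 0 ≤ r) (hr1 : r < 1) :
    ‖deriv f r‖ = ∑' n : ℕ, ((n : ℝ) + 1) * c (n + 1) * r ^ n := by
  have hr : (r : ℂ) ∈ Metric.ball (0 : ℂ) 1 := by
    rwa [mem_ball_zero_iff, Complex.norm_real, Real.norm_of_nonneg hr0]
  rw [(hasDerivAt_of_hasSum_pow hf hr).deriv]
  have hreal : ∑' n : ℕ, ((n : ℂ) + 1) * c (n + 1) * (r : ℂ) ^ n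
      = ((∑' n : ℕ, ((n : ℝ) + 1) * c (n + 1) * r ^ n : ℝ) : ℂ) := by
    push_cast [Complex.ofReal_tsum]
    rfl
  rw [hreal, Complex.norm_real, Real.norm_of_nonneg]
  exact tsum_nonneg fun n => by have := hc (n + 1); positivity

theorem norm_apply_zero_eq_coeff_zero (hc : ∀ n, 0 ≤ c n)
    (hf : ∀ z ∈ Metric.ball (0 : ℂ) 1, HasSum (fun n => (c n : ℂ) * z ^ n) (f z)) :
    ‖f 0‖ = c 0 := by
  have h0 := hasSum_single (f := fun n => (c n : ℂ) * 0 ^ n) 0 fun n hn => by simp [hn]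
  rw [(hf 0 (Metric.mem_ball_self one_pos)).unique h0, pow_zero, mul_one, Complex.norm_real,
    Real.norm_of_nonneg (hc 0)]

end NonnegCoeff

theorem one_sub_one_div_succ_mem_Ico (n : ℕ) : 1 - 1 / ((n : ℝ) + 1) ∈ Ico (0 : ℝ) 1 := by
  have h : 0 < 1 / ((n : ℝ) + 1) := by positivity
  have h' : 1 / ((n : ℝ) + 1) ≤ 1 := by
    rw [div_le_one (by positivity)]
    linarith [n.cast_nonneg (α := ℝ)]
  constructor <;> linarith

theorem exp_neg_one_le_one_sub_one_div_succ_pow (m : ℕ) :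
    Real.exp (-1) ≤ (1 - 1 / ((m : ℝ) + 1)) ^ m := by
  rcases Nat.eq_zero_or_pos m with rfl | hm
  · simp
  have hinv : 1 - 1 / ((m : ℝ) + 1) = (1 + (m : ℝ)⁻¹)⁻¹ := by
    field_simp
    ring
  rw [hinv, inv_pow, Real.exp_neg]
  exact inv_anti₀ (by positivity) Real.one_add_inv_pow_le_exp

theorem tsum_mul_pow_eq_one_sub_mul_tsum {d : ℕ → ℝ} {r : ℝ} (hr : |r| < 1)
    (hd : Summable fun n => d n * r ^ n) :
    ∑' n, d n * r ^ n = (1 - r) * ∑' n, (∑ k ∈ range (n + 1), d k) * r ^ n := by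
  have hcauchy := tsum_mul_tsum_eq_tsum_sum_range_of_summable_norm
    (f := fun n => d n * r ^ n) (g := fun n => r ^ n) (summable_norm_iff.mpr hd)
    (summable_norm_iff.mpr (summable_geometric_of_abs_lt_one hr))
  have hterm : ∀ n, ∑ k ∈ range (n + 1), d k * r ^ k * r ^ (n - k)
      = (∑ k ∈ range (n + 1), d k) * r ^ n := fun n => by
    rw [sum_mul]
    refine sum_congr rfl fun k hk => ?_
    rw [mul_assoc, pow_mul_pow_sub r (Nat.lt_succ_iff.mp (mem_range.mp hk))]
  rw [tsum_geometric_of_abs_lt_one hr, tsum_congr hterm] at hcauchy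
  have h1r : 1 - r ≠ 0 := by linarith [(abs_lt.mp hr).2]
  rw [← hcauchy, mul_comm, inv_mul_cancel_right₀ h1r]

theorem pow_mul_sum_range_le_tsum {d : ℕ → ℝ} (hd : ∀ n, 0 ≤ d n) {r : ℝ} (hr0 : 0 ≤ r)
    (hr1 : r ≤ 1) (hs : Summable fun n => d n * r ^ n) (m : ℕ) :
    r ^ m * ∑ k ∈ range (m + 1), d k ≤ ∑' k, d k * r ^ k := by
  rw [mul_sum]
  refine (sum_le_sum fun k hk => ?_).trans (hs.sum_le_tsum _ fun k _ => by have := hd k; positivity)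
  rw [mul_comm]
  exact mul_le_mul_of_nonneg_left
    (pow_le_pow_of_le_one hr0 hr1 (Nat.lt_succ_iff.mp (mem_range.mp hk))) (hd k)

theorem sum_range_succ_le_exp_one_mul_tsum {d : ℕ → ℝ} (hd : ∀ n, 0 ≤ d n) (m : ℕ)
    (hs : Summable fun n => d n * (1 - 1 / ((m : ℝ) + 1)) ^ n) :
    ∑ k ∈ range (m + 1), d k ≤ Real.exp 1 * ∑' k, d k * (1 - 1 / ((m : ℝ) + 1)) ^ k := by
  have hr := one_sub_one_div_succ_mem_Ico m
  have hsum : 0 ≤ ∑ k ∈ range (m + 1), d k := sum_nonneg fun k _ => hd k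
  calc ∑ k ∈ range (m + 1), d k
      = Real.exp 1 * (Real.exp (-1) * ∑ k ∈ range (m + 1), d k) := by
        rw [← mul_assoc, ← Real.exp_add, add_neg_cancel, Real.exp_zero, one_mul]
    _ ≤ Real.exp 1 * ((1 - 1 / ((m : ℝ) + 1)) ^ m * ∑ k ∈ range (m + 1), d k) := by
        gcongr
        exact exp_neg_one_le_one_sub_one_div_succ_pow m
    _ ≤ _ := by
        gcongr
        exact pow_mul_sum_range_le_tsum hd hr.1 hr.2.le hs m

theorem sum_range_succ_pow_mul_geometric_le (q N : ℕ) {r : ℝ} (hr0 : 0 ≤ r) (hr1 : r < 1) :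
    ∑ n ∈ range N, ((n : ℝ) + 1) ^ q * r ^ n ≤ q.factorial / (1 - r) ^ (q + 1) := by
  have hchoose : ∀ n : ℕ, ((n : ℝ) + 1) ^ q ≤ q.factorial * ((n + q).choose q : ℝ) := fun n => by
    have h := Nat.pow_sub_le_descFactorial (n + q) q
    rw [show n + q + 1 - q = n + 1 by omega, Nat.descFactorial_eq_factorial_mul_choose] at h
    exact_mod_cast h
  calc ∑ n ∈ range N, ((n : ℝ) + 1) ^ q * r ^ n
      ≤ ∑ n ∈ range N, q.factorial * (((n + q).choose q : ℝ) * r ^ n) :=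
        sum_le_sum fun n _ => by rw [← mul_assoc]; gcongr; exact hchoose n
    _ = q.factorial * ∑ n ∈ range N, ((n + q).choose q : ℝ) * r ^ n := by rw [mul_sum]
    _ ≤ q.factorial * (1 / (1 - r) ^ (q + 1)) := by
        gcongr
        exact sum_le_hasSum _ (fun n _ => by positivity)
          (hasSum_choose_mul_geometric_of_norm_lt_one q (by rwa [Real.norm_of_nonneg hr0]))
    _ = q.factorial / (1 - r) ^ (q + 1) := by rw [mul_one_div]

theorem sum_range_one_add_pow_mul_geometric_le (q N : ℕ) {r : ℝ} (hr0 : 0 ≤ r) (hr1 : r < 1) :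
    ∑ n ∈ range N, (1 + (((n : ℝ) + 1) * (1 - r)) ^ q) * r ^ n ≤ (1 + q.factorial) / (1 - r) := by
  have h1r : 0 < 1 - r := by linarith
  have hgeom : ∑ n ∈ range N, r ^ n ≤ 1 / (1 - r) := by
    rw [one_div]
    exact sum_le_hasSum _ (fun n _ => by positivity) (hasSum_geometric_of_lt_one hr0 hr1)
  have hpow := sum_range_succ_pow_mul_geometric_le q N hr0 hr1
  calc ∑ n ∈ range N, (1 + (((n : ℝ) + 1) * (1 - r)) ^ q) * r ^ n
      = ∑ n ∈ range N, r ^ n + (1 - r) ^ q * ∑ n ∈ range N, ((n : ℝ) + 1) ^ q * r ^ n := by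
        rw [mul_sum, ← sum_add_distrib]
        exact sum_congr rfl fun n _ => by rw [mul_pow]; ring
    _ ≤ 1 / (1 - r) + (1 - r) ^ q * (q.factorial / (1 - r) ^ (q + 1)) := by gcongr
    _ = (1 + q.factorial) / (1 - r) := by field_simp; ring

theorem one_sub_sq_pos_of_mem_Ico {s : ℝ} (hs : s ∈ Ico (0 : ℝ) 1) : 0 < 1 - s ^ 2 := by
  nlinarith [hs.1, hs.2]

namespace IsNormal

variable {ν : ℝ → ℝ} {a b : ℝ}

theorem pos (hν : IsNormal ν a b) {s : ℝ} (hs : s ∈ Ico (0 : ℝ) 1) : 0 < ν s := hν.2.2.1 s hs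

theorem exists_le_mul_of_le (hν : IsNormal ν a b) :
    ∃ C > 0, ∀ s ∈ Ico (0 : ℝ) 1, ∀ r ∈ Ico (0 : ℝ) 1, s ≤ r → ν r ≤ C * ν s := by
  obtain ⟨ha, -, hpos, -, ⟨C, hC, hdec⟩, -⟩ := hν
  refine ⟨1 + C, by positivity, fun s hs r hr hsr => ?_⟩
  have hνs := hpos s hs
  rcases hsr.eq_or_lt with rfl | hlt
  · nlinarith
  have h := hdec s hs r hr hlt
  have hr2 := one_sub_sq_pos_of_mem_Ico hr
  have hs2 := one_sub_sq_pos_of_mem_Ico hs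
  simp only at h
  rw [div_le_iff₀ (by positivity)] at h
  have hratio : (1 - r ^ 2) ^ a / (1 - s ^ 2) ^ a ≤ 1 := by
    rw [div_le_one (by positivity)]
    exact Real.rpow_le_rpow hr2.le (by nlinarith [hs.1]) ha.le
  calc ν r ≤ C * ν s * ((1 - r ^ 2) ^ a / (1 - s ^ 2) ^ a) := h.trans_eq (by ring)
    _ ≤ C * ν s * 1 := mul_le_mul_of_nonneg_left hratio (by positivity)
    _ ≤ (1 + C) * ν s := by nlinarith

theorem exists_le_mul_div_rpow (hν : IsNormal ν a b) :
    ∃ C > 0, ∀ r ∈ Ico (0 : ℝ) 1, ∀ s ∈ Ico (0 : ℝ) 1, r < s →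
      ν r ≤ C * ν s * ((1 - r) / (1 - s)) ^ b := by
  obtain ⟨ha, hab, hpos, -, -, ⟨C, hC, hinc⟩⟩ := hν
  have hb : 0 ≤ b := ha.le.trans hab
  refine ⟨C * 2 ^ b, by positivity, fun r hr s hs hrs => ?_⟩
  have h := hinc r hr s hs hrs
  have hr2 := one_sub_sq_pos_of_mem_Ico hr
  have hs2 := one_sub_sq_pos_of_mem_Ico hs
  have h1r : 0 < 1 - r := by linarith [hr.2]
  have h1s : 0 < 1 - s := by linarith [hs.2]
  simp only at h
  rw [div_le_iff₀ (by positivity)] at h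
  have hratio : (1 - r ^ 2) / (1 - s ^ 2) ≤ 2 * ((1 - r) / (1 - s)) := by
    rw [div_le_iff₀ hs2]
    field_simp
    nlinarith [hr.1, hr.2, hs.1, mul_pos h1r h1s]
  calc ν r ≤ C * ν s * ((1 - r ^ 2) / (1 - s ^ 2)) ^ b := by
        rw [Real.div_rpow hr2.le hs2.le]
        exact h.trans_eq (by ring)
    _ ≤ C * ν s * (2 * ((1 - r) / (1 - s))) ^ b := by
        have := hpos s hs
        gcongr
    _ = C * 2 ^ b * ν s * ((1 - r) / (1 - s)) ^ b := by
        rw [Real.mul_rpow (by norm_num) (by positivity)]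
        ring

theorem exists_le_mul_one_add_pow (hν : IsNormal ν a b) :
    ∃ q : ℕ, ∃ K > 0, ∀ r ∈ Ico (0 : ℝ) 1, ∀ s ∈ Ico (0 : ℝ) 1,
      ν r ≤ K * ν s * (1 + ((1 - r) / (1 - s)) ^ q) := by
  obtain ⟨C₁, hC₁, hle⟩ := hν.exists_le_mul_of_le
  obtain ⟨C₂, hC₂, hlt⟩ := hν.exists_le_mul_div_rpow
  refine ⟨⌈b⌉₊, C₁ + C₂, by positivity, fun r hr s hs => ?_⟩
  have hνs := hν.pos hs
  have hx : 0 ≤ (1 - r) / (1 - s) := div_nonneg (by linarith [hr.2]) (by linarith [hs.2])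
  have hxq : 0 ≤ ((1 - r) / (1 - s)) ^ ⌈b⌉₊ := by positivity
  rcases lt_or_ge r s with hrs | hsr
  · have hx1 : 1 ≤ (1 - r) / (1 - s) := by
      rw [one_le_div (by linarith [hs.2])]
      linarith
    have hpow : ((1 - r) / (1 - s)) ^ b ≤ ((1 - r) / (1 - s)) ^ ⌈b⌉₊ := by
      rw [← Real.rpow_natCast]
      exact Real.rpow_le_rpow_of_exponent_le hx1 (Nat.le_ceil b)
    calc ν r ≤ C₂ * ν s * ((1 - r) / (1 - s)) ^ b := hlt r hr s hs hrs
      _ ≤ C₂ * ν s * ((1 - r) / (1 - s)) ^ ⌈b⌉₊ := by gcongr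
      _ ≤ (C₁ + C₂) * ν s * (1 + ((1 - r) / (1 - s)) ^ ⌈b⌉₊) := by
        nlinarith [mul_nonneg hC₁.le hνs.le, mul_nonneg (mul_nonneg hC₁.le hνs.le) hxq,
          mul_nonneg hC₂.le hνs.le]
  · calc ν r ≤ C₁ * ν s := hle s hs r hr hsr
      _ ≤ (C₁ + C₂) * ν s * (1 + ((1 - r) / (1 - s)) ^ ⌈b⌉₊) := by
        nlinarith [mul_nonneg hC₁.le hνs.le, mul_nonneg (mul_nonneg hC₁.le hνs.le) hxq,
          mul_nonneg (mul_nonneg hC₂.le hνs.le) hxq, mul_nonneg hC₂.le hνs.le]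

end IsNormal

theorem weight_mul_sum_range_le {ν : ℝ → ℝ} {q : ℕ} {K M : ℝ} (hK : 0 ≤ K)
    (hcomp : ∀ r ∈ Ico (0 : ℝ) 1, ∀ s ∈ Ico (0 : ℝ) 1,
      ν r ≤ K * ν s * (1 + ((1 - r) / (1 - s)) ^ q))
    {d : ℕ → ℝ} (hd : ∀ n, 0 ≤ d n)
    (hM : ∀ n : ℕ, ν (1 - 1 / ((n : ℝ) + 1)) * ∑ k ∈ range (n + 1), d k ≤ M)
    {r : ℝ} (hr : r ∈ Ico (0 : ℝ) 1) (n : ℕ) :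
    ν r * ∑ k ∈ range (n + 1), d k ≤ K * (1 + (((n : ℝ) + 1) * (1 - r)) ^ q) * M := by
  have hT : 0 ≤ ∑ k ∈ range (n + 1), d k := sum_nonneg fun k _ => hd k
  have hratio : (1 - r) / (1 - (1 - 1 / ((n : ℝ) + 1))) = ((n : ℝ) + 1) * (1 - r) := by
    rw [sub_sub_cancel, div_div_eq_mul_div, div_one, mul_comm]
  have hνr := hcomp r hr _ (one_sub_one_div_succ_mem_Ico n)
  rw [hratio] at hνr
  have h1r : 0 ≤ 1 - r := by linarith [hr.2]
  calc ν r * ∑ k ∈ range (n + 1), d k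
      ≤ K * ν (1 - 1 / ((n : ℝ) + 1)) * (1 + (((n : ℝ) + 1) * (1 - r)) ^ q)
          * ∑ k ∈ range (n + 1), d k := by gcongr
    _ = K * (1 + (((n : ℝ) + 1) * (1 - r)) ^ q)
          * (ν (1 - 1 / ((n : ℝ) + 1)) * ∑ k ∈ range (n + 1), d k) := by ring
    _ ≤ K * (1 + (((n : ℝ) + 1) * (1 - r)) ^ q) * M := by gcongr; exact hM n

theorem weight_mul_tsum_le {ν : ℝ → ℝ} {q : ℕ} {K M : ℝ} (hν : ∀ s ∈ Ico (0 : ℝ) 1, 0 ≤ ν s)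
    (hK : 0 ≤ K) (hcomp : ∀ r ∈ Ico (0 : ℝ) 1, ∀ s ∈ Ico (0 : ℝ) 1,
      ν r ≤ K * ν s * (1 + ((1 - r) / (1 - s)) ^ q))
    {d : ℕ → ℝ} (hd : ∀ n, 0 ≤ d n)
    (hM : ∀ n : ℕ, ν (1 - 1 / ((n : ℝ) + 1)) * ∑ k ∈ range (n + 1), d k ≤ M)
    {r : ℝ} (hr : r ∈ Ico (0 : ℝ) 1) (hs : Summable fun n => d n * r ^ n) :
    ν r * ∑' n, d n * r ^ n ≤ K * (1 + q.factorial) * M := by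
  have h1r : 0 < 1 - r := by linarith [hr.2]
  have hT : ∀ n, 0 ≤ ∑ k ∈ range (n + 1), d k := fun n => sum_nonneg fun k _ => hd k
  have hM0 : 0 ≤ M := by
    simpa using (mul_nonneg (hν _ (one_sub_one_div_succ_mem_Ico 0)) (hT 0)).trans (hM 0)
  have hsum : ∑' n, ν r * (∑ k ∈ range (n + 1), d k) * r ^ n
      ≤ K * M * ((1 + q.factorial) / (1 - r)) := by
    refine Real.tsum_le_of_sum_range_le (fun n => ?_) fun N => ?_
    · have := hν r hr; have := hT n; have := hr.1; positivity
    · calc ∑ n ∈ range N, ν r * (∑ k ∈ range (n + 1), d k) * r ^ n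
          ≤ ∑ n ∈ range N, K * M * ((1 + (((n : ℝ) + 1) * (1 - r)) ^ q) * r ^ n) :=
            sum_le_sum fun n _ => by
              have := hr.1
              have := weight_mul_sum_range_le hK hcomp hd hM hr n
              calc ν r * (∑ k ∈ range (n + 1), d k) * r ^ n
                  ≤ K * (1 + (((n : ℝ) + 1) * (1 - r)) ^ q) * M * r ^ n := by gcongr
                _ = _ := by ring
        _ ≤ K * M * ((1 + q.factorial) / (1 - r)) := by
            rw [← mul_sum]
            gcongr
            exact sum_range_one_add_pow_mul_geometric_le q N hr.1 hr.2
  calc ν r * ∑' n, d n * r ^ n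
      = (1 - r) * ∑' n, ν r * (∑ k ∈ range (n + 1), d k) * r ^ n := by
        rw [tsum_mul_pow_eq_one_sub_mul_tsum (abs_lt.mpr ⟨by linarith [hr.1], hr.2⟩) hs,
          mul_left_comm, ← tsum_mul_left]
        simp only [mul_assoc]
    _ ≤ (1 - r) * (K * M * ((1 + q.factorial) / (1 - r))) := by gcongr
    _ = K * (1 + q.factorial) * M := by field_simp

theorem sum_Icc_natCast_mul_eq_sum_range (c : ℕ → ℝ) (n : ℕ) :
    ∑ k ∈ Icc 1 n, (k : ℝ) * c k = ∑ k ∈ range n, ((k : ℝ) + 1) * c (k + 1) := by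
  induction n with
  | zero => simp
  | succ n ih =>
    rw [sum_Icc_succ_top (by omega), ih, sum_range_succ]
    push_cast
    ring

theorem bddAbove_range_iff_and_ciSup_le {ι κ : Type*} [Nonempty ι] [Nonempty κ]
    {F : ι → ℝ} {u : κ → ℝ} {A B : ℝ} (hA : 0 ≤ A)
    (hu : ∀ j, ∃ i, u j ≤ A * F i) (hF : ∀ M, (∀ j, u j ≤ M) → ∀ i, F i ≤ B * M) :
    (BddAbove (range F) ↔ BddAbove (range u)) ∧
      (BddAbove (range F) → ⨆ i, F i ≤ B * ⨆ j, u j ∧ ⨆ j, u j ≤ A * ⨆ i, F i) := by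
  have hle : BddAbove (range F) → ∀ j, u j ≤ A * ⨆ i, F i := fun hbdd j => by
    obtain ⟨i, hi⟩ := hu j
    exact hi.trans (mul_le_mul_of_nonneg_left (le_ciSup hbdd i) hA)
  have hbdd_u : BddAbove (range F) → BddAbove (range u) := fun hbdd =>
    ⟨_, forall_mem_range.mpr (hle hbdd)⟩
  refine ⟨⟨hbdd_u, fun hbdd => ⟨_, forall_mem_range.mpr (hF _ fun j => le_ciSup hbdd j)⟩⟩,
    fun hbdd => ⟨ciSup_le (hF _ fun j => le_ciSup (hbdd_u hbdd) j), ciSup_le (hle hbdd)⟩⟩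

theorem exists_forall_one_le_iff_bddAbove_range (g : ℕ → ℝ) :
    (∃ M, ∀ n, 1 ≤ n → g n ≤ M) ↔ BddAbove (range fun n => g (n + 1)) := by
  refine ⟨fun ⟨M, hM⟩ => ⟨M, forall_mem_range.mpr fun n => hM (n + 1) (by omega)⟩,
    fun ⟨M, hM⟩ => ⟨M, fun n hn => ?_⟩⟩
  obtain ⟨m, rfl⟩ := Nat.exists_eq_add_of_le' hn
  exact hM (mem_range_self m)

section NonnegCoeff

variable {f : ℂ → ℂ} {c : ℕ → ℝ} {ν : ℝ → ℝ}

theorem exists_weight_mul_sum_Icc_le (hν : ∀ s ∈ Ico (0 : ℝ) 1, 0 ≤ ν s) (hc : ∀ n, 0 ≤ c n)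
    (hf : ∀ z ∈ Metric.ball (0 : ℂ) 1, HasSum (fun n => (c n : ℂ) * z ^ n) (f z)) (n : ℕ) :
    ∃ z : Metric.ball (0 : ℂ) 1, ν (1 - 1 / ((n : ℝ) + 1)) * ∑ k ∈ Icc 1 (n + 1), (k : ℝ) * c k
      ≤ Real.exp 1 * (ν ‖(z : ℂ)‖ * ‖deriv f z‖) := by
  set r := 1 - 1 / ((n : ℝ) + 1)
  have hr : r ∈ Ico (0 : ℝ) 1 := one_sub_one_div_succ_mem_Ico n
  have hz : (r : ℂ) ∈ Metric.ball (0 : ℂ) 1 := by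
    rw [mem_ball_zero_iff, Complex.norm_real, Real.norm_of_nonneg hr.1]
    exact hr.2
  refine ⟨⟨r, hz⟩, ?_⟩
  rw [Complex.norm_real, Real.norm_of_nonneg hr.1, norm_deriv_ofReal hc hf hr.1 hr.2,
    sum_Icc_natCast_mul_eq_sum_range, mul_left_comm]
  exact mul_le_mul_of_nonneg_left (sum_range_succ_le_exp_one_mul_tsum
    (fun k => by have := hc (k + 1); positivity) n
    (summable_succ_mul_coeff_mul_pow hc hf hr.1 hr.2))
    (hν r hr)

theorem weight_mul_norm_deriv_le {q : ℕ} {K M : ℝ} (hν : ∀ s ∈ Ico (0 : ℝ) 1, 0 ≤ ν s)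
    (hK : 0 ≤ K) (hcomp : ∀ r ∈ Ico (0 : ℝ) 1, ∀ s ∈ Ico (0 : ℝ) 1,
      ν r ≤ K * ν s * (1 + ((1 - r) / (1 - s)) ^ q))
    (hc : ∀ n, 0 ≤ c n)
    (hf : ∀ z ∈ Metric.ball (0 : ℂ) 1, HasSum (fun n => (c n : ℂ) * z ^ n) (f z))
    (hM : ∀ n : ℕ, ν (1 - 1 / ((n : ℝ) + 1)) * ∑ k ∈ Icc 1 (n + 1), (k : ℝ) * c k ≤ M)
    {z : ℂ} (hz : z ∈ Metric.ball (0 : ℂ) 1) :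
    ν ‖z‖ * ‖deriv f z‖ ≤ K * (1 + q.factorial) * M := by
  have hr : ‖z‖ ∈ Ico (0 : ℝ) 1 := ⟨norm_nonneg z, mem_ball_zero_iff.mp hz⟩
  simp only [sum_Icc_natCast_mul_eq_sum_range] at hM
  exact (mul_le_mul_of_nonneg_left (norm_deriv_le_tsum hc hf hz) (hν _ hr)).trans
    (weight_mul_tsum_le hν hK hcomp (fun k => by have := hc (k + 1); positivity) hM hr
      (summable_succ_mul_coeff_mul_pow hc hf hr.1 hr.2))

end NonnegCoeff

theorem stmt5 (ν : ℝ → ℝ) (a b : ℝ) (hν : IsNormal ν a b) :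
    ∃ C > 0, ∀ (f : ℂ → ℂ) (c : ℕ → ℝ), (∀ n, 0 ≤ c n) →
      (∀ z ∈ Metric.ball (0:ℂ) 1, HasSum (fun n : ℕ => (c n : ℂ) * z ^ n) (f z)) →
      ((MemBloch ν f ↔
          ∃ M : ℝ, ∀ n : ℕ, 1 ≤ n →
            ν (1 - 1 / (n:ℝ)) * ∑ k ∈ Finset.Icc 1 n, (k : ℝ) * c k ≤ M)
        ∧ (MemBloch ν f →
            blochNorm ν f ≤
              C * (c 0 + ⨆ n : ℕ, ν (1 - 1 / ((n:ℝ) + 1)) *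
                ∑ k ∈ Finset.Icc 1 (n + 1), (k : ℝ) * c k)
            ∧ c 0 + (⨆ n : ℕ, ν (1 - 1 / ((n:ℝ) + 1)) *
                ∑ k ∈ Finset.Icc 1 (n + 1), (k : ℝ) * c k) ≤ C * blochNorm ν f)) := by
  obtain ⟨q, K, hK, hcomp⟩ := hν.exists_le_mul_one_add_pow
  have hν0 : ∀ s ∈ Ico (0 : ℝ) 1, 0 ≤ ν s := fun s hs => (hν.pos hs).le
  refine ⟨Real.exp 1 + K * (1 + q.factorial), by positivity, fun f c hc hf => ?_⟩
  have hball : Nonempty (Metric.ball (0 : ℂ) 1) := ⟨⟨0, Metric.mem_ball_self one_pos⟩⟩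
  obtain ⟨hbdd_iff, hsup⟩ := bddAbove_range_iff_and_ciSup_le
    (F := fun z : Metric.ball (0 : ℂ) 1 => ν ‖(z : ℂ)‖ * ‖deriv f z‖)
    (Real.exp_pos 1).le (exists_weight_mul_sum_Icc_le hν0 hc hf)
    (fun M hM z => weight_mul_norm_deriv_le hν0 hK.le hcomp hc hf hM z.2)
  have hmem : MemBloch ν f ↔ BddAbove (range fun z : Metric.ball (0 : ℂ) 1 =>
      ν ‖(z : ℂ)‖ * ‖deriv f z‖) :=
    and_iff_right fun z hz =>
      (hasDerivAt_of_hasSum_pow hf hz).differentiableAt.differentiableWithinAt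
  refine ⟨hmem.trans (hbdd_iff.trans ?_), fun hf' => ?_⟩
  · rw [exists_forall_one_le_iff_bddAbove_range]
    push_cast
    rfl
  obtain ⟨hS, hU⟩ := hsup (hmem.mp hf')
  have hS0 : 0 ≤ ⨆ z : Metric.ball (0 : ℂ) 1, ν ‖(z : ℂ)‖ * ‖deriv f z‖ := Real.iSup_nonneg fun z =>
    mul_nonneg (hν0 _ ⟨norm_nonneg _, mem_ball_zero_iff.mp z.2⟩) (norm_nonneg _)
  have hU0 : 0 ≤ ⨆ n : ℕ, ν (1 - 1 / ((n : ℝ) + 1)) * ∑ k ∈ Icc 1 (n + 1), (k : ℝ) * c k :=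
    Real.iSup_nonneg fun n => mul_nonneg (hν0 _ (one_sub_one_div_succ_mem_Ico n))
      (sum_nonneg fun k _ => mul_nonneg k.cast_nonneg (hc k))
  have he : 1 ≤ Real.exp 1 := Real.one_le_exp zero_le_one
  have hB : 0 ≤ K * (1 + q.factorial) := by positivity
  rw [blochNorm, norm_apply_zero_eq_coeff_zero hc hf]
  constructor <;> nlinarith [hc 0, mul_nonneg hB (hc 0), mul_nonneg hB hS0, mul_nonneg hB hU0]
end

section
/- Let γ > 0 and let f(z) = ∑_{n≥0} a_n z^n be analytic on the unit disk with a_n ≥ 0 for all n. Then f belongs to the Bloch type space B^γ (i.e., sup_{z∈D} (1-|z|²)^γ |f'(z)| < ∞) if and only if sup_{n≥1} n^{-γ} ∑_{k=1}^n k a_k < ∞. -/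
open MeasureTheory Set Filter

/-! For nonnegative coefficients the derivative series `g(r) = ∑ (n + 1) c_{n+1} r ^ n` equals
`f'(r)` on `[0, 1)` and dominates `|f'(z)|` on `|z| = r`, so `f ∈ B^γ` is the radial bound
`(1 - r²)^γ g(r) = O(1)`. With `S_n = ∑_{k ≤ n} k c_k`, the estimate `S_n r ^ n ≤ g(r)` at
`r = n / (n + 1)` gives `S_n = O(n^γ)`. Conversely, summation by parts writes the partial sums of
`g(r)` as `S_N r ^ N + (1 - r) ∑_{j < N} S_{j+1} r ^ j`, and `∑ (j + 1)^γ r ^ j = O((1 - r)^{-1-γ})`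
then gives `g(r) = O((1 - r)^{-γ})`. -/

section Elementary

variable {γ : ℝ}

theorem Real.rpow_le_mul_exp (hγ : 0 < γ) {x : ℝ} (hx : 0 ≤ x) :
    x ^ γ ≤ γ ^ γ * Real.exp x := by
  have h : (x / γ) ^ γ ≤ Real.exp (x / γ) ^ γ :=
    Real.rpow_le_rpow (by positivity) (by linarith [Real.add_one_le_exp (x / γ)]) hγ.le
  rwa [← Real.exp_mul, div_mul_cancel₀ _ hγ.ne', Real.div_rpow hx hγ.le,
    div_le_iff₀ (by positivity), mul_comm] at h

theorem natCast_rpow_mul_pow_le (hγ : 0 < γ) {r : ℝ} (hr0 : 0 ≤ r) (hr1 : r < 1) (n : ℕ) :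
    (n : ℝ) ^ γ * r ^ n ≤ γ ^ γ * (1 - r) ^ (-γ) := by
  have h1r : 0 < 1 - r := by linarith
  set x := (n : ℝ) * (1 - r)
  have hpow : r ^ n ≤ Real.exp (-x) := by
    calc r ^ n ≤ Real.exp (r - 1) ^ n :=
          pow_le_pow_left₀ hr0 (by linarith [Real.add_one_le_exp (r - 1)]) n
      _ = Real.exp (-x) := by rw [← Real.exp_nat_mul]; congr 1; ring
  have hn : (n : ℝ) ^ γ = x ^ γ * (1 - r) ^ (-γ) := by
    rw [Real.mul_rpow (by positivity) h1r.le, mul_assoc, ← Real.rpow_add h1r, add_neg_cancel,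
      Real.rpow_zero, mul_one]
  have hx : x ^ γ * Real.exp (-x) ≤ γ ^ γ := by
    have := Real.rpow_le_mul_exp hγ (show 0 ≤ x by positivity)
    rwa [Real.exp_neg, ← div_eq_mul_inv, div_le_iff₀ (Real.exp_pos _)]
  calc (n : ℝ) ^ γ * r ^ n ≤ (n : ℝ) ^ γ * Real.exp (-x) := by gcongr
    _ = x ^ γ * Real.exp (-x) * (1 - r) ^ (-γ) := by rw [hn]; ring
    _ ≤ γ ^ γ * (1 - r) ^ (-γ) := by gcongr

theorem natCast_add_one_rpow_le (hγ : 0 ≤ γ) (j : ℕ) :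
    ((j : ℝ) + 1) ^ γ ≤ 2 ^ γ * ((j : ℝ) ^ γ + 1) := by
  rcases Nat.eq_zero_or_pos j with rfl | hj
  · simp only [Nat.cast_zero, zero_add, Real.one_rpow]
    nlinarith [Real.one_le_rpow (by norm_num : (1:ℝ) ≤ 2) hγ, Real.rpow_nonneg le_rfl γ]
  · have hj1 : (1 : ℝ) ≤ j := by exact_mod_cast hj
    calc ((j : ℝ) + 1) ^ γ ≤ (2 * j) ^ γ := by gcongr; linarith
      _ = 2 ^ γ * (j : ℝ) ^ γ := Real.mul_rpow (by norm_num) (by positivity)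
      _ ≤ 2 ^ γ * ((j : ℝ) ^ γ + 1) := by gcongr; linarith

theorem exp_neg_one_le_pow_div_add_one (n : ℕ) : Real.exp (-1) ≤ ((n : ℝ) / (n + 1)) ^ n := by
  rcases Nat.eq_zero_or_pos n with rfl | hn
  · simp
  have hn' : (0 : ℝ) < n := by exact_mod_cast hn
  have h : Real.exp (-1 / n) ≤ n / (n + 1) := by
    calc Real.exp (-1 / n) = (Real.exp (1 / n))⁻¹ := by rw [neg_div, Real.exp_neg]
      _ ≤ (1 / (n : ℝ) + 1)⁻¹ := inv_anti₀ (by positivity) (Real.add_one_le_exp _)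
      _ = n / (n + 1) := by field_simp; ring
  calc Real.exp (-1) = Real.exp (-1 / n) ^ n := by rw [← Real.exp_nat_mul]; field_simp
    _ ≤ _ := by gcongr

theorem add_one_rpow_mul_pow_le (hγ : 0 < γ) {s : ℝ} (hs0 : 0 ≤ s) (hs1 : s < 1) (j : ℕ) :
    ((j : ℝ) + 1) ^ γ * s ^ j ≤ 2 ^ γ * (γ ^ γ + 1) * (1 - s) ^ (-γ) := by
  have hsj : s ^ j ≤ (1 - s) ^ (-γ) :=
    (pow_le_one₀ hs0 hs1.le).trans
      (Real.one_le_rpow_of_pos_of_le_one_of_nonpos (by linarith) (by linarith) (by linarith))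
  calc ((j : ℝ) + 1) ^ γ * s ^ j ≤ 2 ^ γ * ((j : ℝ) ^ γ + 1) * s ^ j :=
        mul_le_mul_of_nonneg_right (natCast_add_one_rpow_le hγ.le j) (by positivity)
    _ = 2 ^ γ * ((j : ℝ) ^ γ * s ^ j + s ^ j) := by ring
    _ ≤ 2 ^ γ * (γ ^ γ * (1 - s) ^ (-γ) + (1 - s) ^ (-γ)) :=
        mul_le_mul_of_nonneg_left (add_le_add (natCast_rpow_mul_pow_le hγ hs0 hs1 j) hsj)
          (by positivity)
    _ = 2 ^ γ * (γ ^ γ + 1) * (1 - s) ^ (-γ) := by ring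

/-- Splitting `r ^ j = √r ^ j * √r ^ j`, one factor absorbs `(j + 1) ^ γ` and the other is summed
as a geometric series; `1 - √r ≥ (1 - r) / 2`. -/
theorem sum_range_add_one_rpow_mul_pow_le (hγ : 0 < γ) {r : ℝ} (hr0 : 0 ≤ r) (hr1 : r < 1)
    (N : ℕ) : ∑ j ∈ Finset.range N, ((j : ℝ) + 1) ^ γ * r ^ j
      ≤ 2 ^ γ * (γ ^ γ + 1) * 2 ^ (1 + γ) * (1 - r) ^ (-(1 + γ)) := by
  set s := √r
  have hs0 : 0 ≤ s := Real.sqrt_nonneg r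
  have hs1 : s < 1 := (Real.sqrt_lt' one_pos).2 (by linarith)
  have h1s : 0 < 1 - s := by linarith
  have hrs : ∀ j : ℕ, r ^ j = s ^ j * s ^ j := fun j => by
    rw [← mul_pow, Real.mul_self_sqrt hr0]
  have hhalf : (1 - r) / 2 ≤ 1 - s := by
    nlinarith [Real.sq_sqrt hr0]
  set K := 2 ^ γ * (γ ^ γ + 1)
  calc ∑ j ∈ Finset.range N, ((j : ℝ) + 1) ^ γ * r ^ j
      ≤ ∑ j ∈ Finset.range N, K * (1 - s) ^ (-γ) * s ^ j := by
        refine Finset.sum_le_sum fun j _ => ?_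
        rw [hrs, ← mul_assoc]
        exact mul_le_mul_of_nonneg_right (add_one_rpow_mul_pow_le hγ hs0 hs1 j) (by positivity)
    _ ≤ K * (1 - s) ^ (-γ) * (1 - s) ^ (-1 : ℝ) := by
        rw [← Finset.mul_sum, Real.rpow_neg_one]
        refine mul_le_mul_of_nonneg_left ?_ (by positivity)
        have := geom_sum_Ico_le_of_lt_one (m := 0) (n := N) hs0 hs1
        rwa [← Finset.range_eq_Ico, pow_zero, one_div] at this
    _ = K * (1 - s) ^ (-(1 + γ)) := by
        rw [mul_assoc, ← Real.rpow_add h1s]; ring_nf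
    _ ≤ K * ((1 - r) / 2) ^ (-(1 + γ)) :=
        mul_le_mul_of_nonneg_left
          (Real.rpow_le_rpow_of_nonpos (by linarith) hhalf (by linarith)) (by positivity)
    _ = K * 2 ^ (1 + γ) * (1 - r) ^ (-(1 + γ)) := by
        rw [Real.div_rpow (by linarith) (by norm_num), div_eq_mul_inv,
          ← Real.rpow_neg (by norm_num), neg_neg]; ring

end Elementary

theorem sum_range_mul_pow_by_parts {R : Type*} [CommRing R] (a : ℕ → R) (r : R) (N : ℕ) :
    ∑ k ∈ Finset.range N, a k * r ^ k = (∑ k ∈ Finset.range N, a k) * r ^ N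
      + (1 - r) * ∑ j ∈ Finset.range N, (∑ k ∈ Finset.range (j + 1), a k) * r ^ j := by
  induction N with
  | zero => simp
  | succ N ih =>
    rw [Finset.sum_range_succ, ih, Finset.sum_range_succ a N,
      Finset.sum_range_succ (fun j => (∑ k ∈ Finset.range (j + 1), a k) * r ^ j) N,
      Finset.sum_range_succ a N]
    ring

theorem sum_range_succ_mul_eq_sum_Icc (c : ℕ → ℝ) (n : ℕ) :
    ∑ k ∈ Finset.range n, ((k : ℝ) + 1) * c (k + 1) = ∑ k ∈ Finset.Icc 1 n, (k : ℝ) * c k := by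
  induction n with
  | zero => simp
  | succ n ih =>
    rw [Finset.sum_range_succ, ih, Finset.sum_Icc_succ_top (by omega)]
    push_cast
    ring

theorem ofReal_mem_ball_zero_one {r : ℝ} (hr0 : 0 ≤ r) (hr1 : r < 1) :
    (r : ℂ) ∈ Metric.ball (0:ℂ) 1 := by
  simpa [Complex.norm_real, abs_of_nonneg hr0] using hr1

noncomputable def powerSeriesDeriv (c : ℕ → ℝ) (r : ℝ) : ℝ :=
  ∑' n : ℕ, ((n : ℝ) + 1) * c (n + 1) * r ^ n

section NonnegCoeffs

variable {c : ℕ → ℝ}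

theorem powerSeriesDeriv_nonneg (hc : ∀ n, 0 ≤ c n) {r : ℝ} (hr : 0 ≤ r) :
    0 ≤ powerSeriesDeriv c r :=
  tsum_nonneg fun n => by have := hc (n + 1); positivity

theorem summable_succ_mul_mul_pow (hc : ∀ n, 0 ≤ c n) {ρ : ℝ}
    (hρ : Summable fun n => c n * ρ ^ n) {r : ℝ} (hr0 : 0 ≤ r) (hrρ : r < ρ) :
    Summable fun n : ℕ => ((n : ℝ) + 1) * c (n + 1) * r ^ n := by
  have hρ0 : 0 < ρ := hr0.trans_lt hrρ
  set q := r / ρ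
  have hq0 : 0 ≤ q := by positivity
  have hq1 : q < 1 := (div_lt_one hρ0).2 hrρ
  have hgeom : Summable fun n : ℕ => ((n : ℝ) + 1) * q ^ n := by
    have hq : ‖q‖ < 1 := by rwa [Real.norm_of_nonneg hq0]
    simpa [add_mul] using
      (summable_pow_mul_geometric_of_norm_lt_one 1 hq).add (summable_geometric_of_lt_one hq0 hq1)
  set B := ∑' n : ℕ, ((n : ℝ) + 1) * q ^ n
  refine Summable.of_nonneg_of_le (fun n => by have := hc (n + 1); positivity) (fun n => ?_)
    (((summable_nat_add_iff 1).2 hρ).mul_left (B / ρ))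
  have hB : ((n : ℝ) + 1) * q ^ n ≤ B := hgeom.le_tsum n (fun m _ => by positivity)
  have hcρ : 0 ≤ c (n + 1) * ρ ^ (n + 1) / ρ := by have := hc (n + 1); positivity
  calc ((n : ℝ) + 1) * c (n + 1) * r ^ n
      = ((n : ℝ) + 1) * q ^ n * (c (n + 1) * ρ ^ (n + 1) / ρ) := by
        simp only [q, div_pow]; field_simp; ring
    _ ≤ B * (c (n + 1) * ρ ^ (n + 1) / ρ) := mul_le_mul_of_nonneg_right hB hcρ
    _ = B / ρ * (c (n + 1) * ρ ^ (n + 1)) := by ring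

theorem summable_mul_pow_of_hasSum {f : ℂ → ℂ}
    (hf : ∀ z ∈ Metric.ball (0:ℂ) 1, HasSum (fun n : ℕ => (c n : ℂ) * z ^ n) (f z))
    {ρ : ℝ} (hρ0 : 0 ≤ ρ) (hρ1 : ρ < 1) : Summable fun n => c n * ρ ^ n := by
  exact_mod_cast (hf _ (ofReal_mem_ball_zero_one hρ0 hρ1)).summable

theorem summable_succ_mul_mul_pow_of_hasSum (hc : ∀ n, 0 ≤ c n) {f : ℂ → ℂ}
    (hf : ∀ z ∈ Metric.ball (0:ℂ) 1, HasSum (fun n : ℕ => (c n : ℂ) * z ^ n) (f z))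
    {r : ℝ} (hr0 : 0 ≤ r) (hr1 : r < 1) :
    Summable fun n : ℕ => ((n : ℝ) + 1) * c (n + 1) * r ^ n :=
  summable_succ_mul_mul_pow hc (summable_mul_pow_of_hasSum hf (ρ := (r + 1) / 2)
    (by positivity) (by linarith)) hr0 (by linarith)

theorem hasDerivAt_of_hasSum (hc : ∀ n, 0 ≤ c n) {f : ℂ → ℂ}
    (hf : ∀ z ∈ Metric.ball (0:ℂ) 1, HasSum (fun n : ℕ => (c n : ℂ) * z ^ n) (f z))
    {z : ℂ} (hz : z ∈ Metric.ball (0:ℂ) 1) :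
    HasDerivAt f (∑' n : ℕ, ((n : ℂ) + 1) * c (n + 1) * z ^ n) z := by
  obtain ⟨ρ, hzρ, hρ1⟩ := exists_between (mem_ball_zero_iff.1 hz)
  have hρ0 : 0 < ρ := (norm_nonneg z).trans_lt hzρ
  have hu : Summable fun n : ℕ => (n : ℝ) * c n * ρ ^ (n - 1) := by
    refine (summable_nat_add_iff 1).1 ?_
    simpa using summable_succ_mul_mul_pow_of_hasSum hc hf hρ0.le hρ1
  have hbound : ∀ n, ∀ y ∈ Metric.ball (0:ℂ) ρ,
      ‖(c n : ℂ) * (n * y ^ (n - 1))‖ ≤ n * c n * ρ ^ (n - 1) := fun n y hy => by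
    have hy : ‖y‖ ≤ ρ := (mem_ball_zero_iff.1 hy).le
    rw [norm_mul, norm_mul, Complex.norm_real, Real.norm_of_nonneg (hc n), Complex.norm_natCast,
      norm_pow]
    calc c n * (n * ‖y‖ ^ (n - 1)) ≤ c n * (n * ρ ^ (n - 1)) := by gcongr; exact hc n
      _ = n * c n * ρ ^ (n - 1) := by ring
  have hzρ : z ∈ Metric.ball (0:ℂ) ρ := mem_ball_zero_iff.2 hzρ
  have hderiv := hasDerivAt_tsum_of_isPreconnected hu Metric.isOpen_ball
    (convex_ball (0:ℂ) ρ).isPreconnected (fun n y _ => (hasDerivAt_pow n y).const_mul (c n : ℂ))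
    hbound (Metric.mem_ball_self hρ0) (hf 0 (Metric.mem_ball_self one_pos)).summable hzρ
  have hf' : f =ᶠ[nhds z] fun y => ∑' n : ℕ, (c n : ℂ) * y ^ n :=
    Filter.eventually_of_mem (Metric.isOpen_ball.mem_nhds hz) fun y hy => (hf y hy).tsum_eq.symm
  refine (hderiv.congr_of_eventuallyEq hf').congr_deriv ?_
  rw [(hu.of_norm_bounded fun n => hbound n z hzρ).tsum_eq_zero_add]
  simp only [Nat.cast_zero, zero_mul, mul_zero, zero_add, Nat.add_sub_cancel, Nat.cast_succ]
  exact tsum_congr fun n => by ring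

theorem norm_deriv_le_powerSeriesDeriv (hc : ∀ n, 0 ≤ c n) {f : ℂ → ℂ}
    (hf : ∀ z ∈ Metric.ball (0:ℂ) 1, HasSum (fun n : ℕ => (c n : ℂ) * z ^ n) (f z))
    {z : ℂ} (hz : z ∈ Metric.ball (0:ℂ) 1) : ‖deriv f z‖ ≤ powerSeriesDeriv c ‖z‖ := by
  have hnorm : ∀ n : ℕ, ‖((n : ℂ) + 1) * c (n + 1) * z ^ n‖ = ((n : ℝ) + 1) * c (n + 1) * ‖z‖ ^ n :=
    fun n => by
      rw [norm_mul, norm_mul, Complex.norm_real, Real.norm_of_nonneg (hc _), norm_pow]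
      norm_cast
  rw [(hasDerivAt_of_hasSum hc hf hz).deriv, powerSeriesDeriv, ← tsum_congr hnorm]
  refine norm_tsum_le_tsum_norm ?_
  simpa only [hnorm] using
    summable_succ_mul_mul_pow_of_hasSum hc hf (norm_nonneg z) (mem_ball_zero_iff.1 hz)

theorem deriv_ofReal_eq_powerSeriesDeriv (hc : ∀ n, 0 ≤ c n) {f : ℂ → ℂ}
    (hf : ∀ z ∈ Metric.ball (0:ℂ) 1, HasSum (fun n : ℕ => (c n : ℂ) * z ^ n) (f z))
    {r : ℝ} (hr0 : 0 ≤ r) (hr1 : r < 1) : deriv f r = powerSeriesDeriv c r := by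
  rw [(hasDerivAt_of_hasSum hc hf (ofReal_mem_ball_zero_one hr0 hr1)).deriv, powerSeriesDeriv,
    Complex.ofReal_tsum]
  push_cast
  rfl

theorem memBloch_iff_of_hasSum {ν : ℝ → ℝ} (hν : ∀ r ∈ Ico (0:ℝ) 1, 0 ≤ ν r)
    (hc : ∀ n, 0 ≤ c n) {f : ℂ → ℂ}
    (hf : ∀ z ∈ Metric.ball (0:ℂ) 1, HasSum (fun n : ℕ => (c n : ℂ) * z ^ n) (f z)) :
    MemBloch ν f ↔ ∃ C, ∀ r ∈ Ico (0:ℝ) 1, ν r * powerSeriesDeriv c r ≤ C := by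
  constructor
  · rintro ⟨-, C, hC⟩
    refine ⟨C, fun r ⟨hr0, hr1⟩ => ?_⟩
    have h : ν ‖(r : ℂ)‖ * ‖deriv f r‖ ≤ C := hC ⟨⟨r, ofReal_mem_ball_zero_one hr0 hr1⟩, rfl⟩
    rwa [Complex.norm_real, Real.norm_of_nonneg hr0, deriv_ofReal_eq_powerSeriesDeriv hc hf hr0 hr1,
      Complex.norm_real, Real.norm_of_nonneg (powerSeriesDeriv_nonneg hc hr0)] at h
  · rintro ⟨C, hC⟩
    refine ⟨fun z hz => (hasDerivAt_of_hasSum hc hf hz).differentiableAt.differentiableWithinAt,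
      C, ?_⟩
    rintro _ ⟨z, rfl⟩
    have hz : ‖(z : ℂ)‖ ∈ Ico (0:ℝ) 1 := ⟨norm_nonneg _, mem_ball_zero_iff.1 z.2⟩
    exact (mul_le_mul_of_nonneg_left (norm_deriv_le_powerSeriesDeriv hc hf z.2) (hν _ hz)).trans
      (hC _ hz)

end NonnegCoeffs

section Coefficients

variable {γ : ℝ} {c : ℕ → ℝ}

theorem sum_Icc_mul_pow_le_powerSeriesDeriv (hc : ∀ n, 0 ≤ c n) {r : ℝ} (hr0 : 0 ≤ r)
    (hr1 : r ≤ 1) (hsum : Summable fun n : ℕ => ((n : ℝ) + 1) * c (n + 1) * r ^ n) (n : ℕ) :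
    (∑ k ∈ Finset.Icc 1 n, (k : ℝ) * c k) * r ^ n ≤ powerSeriesDeriv c r := by
  rw [← sum_range_succ_mul_eq_sum_Icc, Finset.sum_mul]
  calc ∑ k ∈ Finset.range n, ((k : ℝ) + 1) * c (k + 1) * r ^ n
      ≤ ∑ k ∈ Finset.range n, ((k : ℝ) + 1) * c (k + 1) * r ^ k := by
        refine Finset.sum_le_sum fun k hk => ?_
        have := hc (k + 1)
        exact mul_le_mul_of_nonneg_left
          (pow_le_pow_of_le_one hr0 hr1 (Finset.mem_range.1 hk).le) (by positivity)
    _ ≤ powerSeriesDeriv c r :=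
        hsum.sum_le_tsum _ fun k _ => by have := hc (k + 1); positivity

/-- Evaluate the radial bound at `r = n / (n + 1)`, where `r ^ n ≥ e⁻¹` and
`1 - r ^ 2 ≥ 1 / (2n)`. -/
theorem rpow_neg_mul_sum_Icc_le (hγ : 0 ≤ γ) (hc : ∀ n, 0 ≤ c n)
    (hsum : ∀ r ∈ Ico (0:ℝ) 1, Summable fun n : ℕ => ((n : ℝ) + 1) * c (n + 1) * r ^ n)
    {C : ℝ} (hC : ∀ r ∈ Ico (0:ℝ) 1, (1 - r ^ 2) ^ γ * powerSeriesDeriv c r ≤ C)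
    {n : ℕ} (hn : 1 ≤ n) :
    (n : ℝ) ^ (-γ) * ∑ k ∈ Finset.Icc 1 n, (k : ℝ) * c k ≤ 2 ^ γ * Real.exp 1 * C := by
  have hn : (1 : ℝ) ≤ n := by exact_mod_cast hn
  set S := ∑ k ∈ Finset.Icc 1 n, (k : ℝ) * c k
  have hS0 : 0 ≤ S := Finset.sum_nonneg fun k _ => mul_nonneg k.cast_nonneg (hc k)
  set r : ℝ := n / (n + 1)
  have hr0 : 0 ≤ r := by positivity
  have hr1 : r < 1 := (div_lt_one (by positivity)).2 (by linarith)
  have hsq : (2 * (n : ℝ))⁻¹ ≤ 1 - r ^ 2 := by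
    have : 1 - r = (n + 1 : ℝ)⁻¹ := by simp only [r]; field_simp; ring
    have : (2 * (n : ℝ))⁻¹ ≤ (n + 1 : ℝ)⁻¹ := inv_anti₀ (by positivity) (by linarith)
    nlinarith
  have hkey : ((2 * (n : ℝ)) ^ γ)⁻¹ * (Real.exp (-1) * S) ≤ C := by
    rw [← Real.inv_rpow (by positivity)]
    calc ((2 * (n : ℝ))⁻¹) ^ γ * (Real.exp (-1) * S) ≤ (1 - r ^ 2) ^ γ * (S * r ^ n) := by
          refine mul_le_mul (Real.rpow_le_rpow (by positivity) hsq hγ) ?_ (by positivity)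
            (Real.rpow_nonneg (by nlinarith) γ)
          rw [mul_comm]
          exact mul_le_mul_of_nonneg_left (exp_neg_one_le_pow_div_add_one n) hS0
      _ ≤ (1 - r ^ 2) ^ γ * powerSeriesDeriv c r :=
          mul_le_mul_of_nonneg_left
            (sum_Icc_mul_pow_le_powerSeriesDeriv hc hr0 hr1.le (hsum r ⟨hr0, hr1⟩) n)
            (Real.rpow_nonneg (by nlinarith) γ)
      _ ≤ C := hC r ⟨hr0, hr1⟩
  calc (n : ℝ) ^ (-γ) * S
      = 2 ^ γ * Real.exp 1 * (((2 * (n : ℝ)) ^ γ)⁻¹ * (Real.exp (-1) * S)) := by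
        rw [Real.mul_rpow (by norm_num) (by positivity), Real.rpow_neg (by positivity),
          Real.exp_neg]
        field_simp
    _ ≤ 2 ^ γ * Real.exp 1 * C := mul_le_mul_of_nonneg_left hkey (by positivity)

theorem powerSeriesDeriv_le (hγ : 0 < γ) (hc : ∀ n, 0 ≤ c n) {M : ℝ}
    (hS : ∀ n : ℕ, ∑ k ∈ Finset.Icc 1 n, (k : ℝ) * c k ≤ M * (n : ℝ) ^ γ)
    {r : ℝ} (hr0 : 0 ≤ r) (hr1 : r < 1) :
    powerSeriesDeriv c r ≤ M * (γ ^ γ + 2 ^ γ * (γ ^ γ + 1) * 2 ^ (1 + γ)) * (1 - r) ^ (-γ) := by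
  have h1r : 0 < 1 - r := by linarith
  have hM : 0 ≤ M := by
    have := hS 1
    simp only [Finset.Icc_self, Finset.sum_singleton, Nat.cast_one, one_mul, Real.one_rpow,
      mul_one] at this
    exact (hc 1).trans this
  refine Real.tsum_le_of_sum_range_le (fun n => by have := hc (n + 1); positivity) fun N => ?_
  rw [sum_range_mul_pow_by_parts]
  simp only [sum_range_succ_mul_eq_sum_Icc]
  have hboundary : (∑ k ∈ Finset.Icc 1 N, (k : ℝ) * c k) * r ^ N ≤ M * (γ ^ γ * (1 - r) ^ (-γ)) :=
    calc (∑ k ∈ Finset.Icc 1 N, (k : ℝ) * c k) * r ^ N ≤ M * (N : ℝ) ^ γ * r ^ N :=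
          mul_le_mul_of_nonneg_right (hS N) (by positivity)
      _ ≤ M * (γ ^ γ * (1 - r) ^ (-γ)) := by
          rw [mul_assoc]
          exact mul_le_mul_of_nonneg_left (natCast_rpow_mul_pow_le hγ hr0 hr1 N) hM
  have hbulk : ∑ j ∈ Finset.range N, (∑ k ∈ Finset.Icc 1 (j + 1), (k : ℝ) * c k) * r ^ j
      ≤ M * (2 ^ γ * (γ ^ γ + 1) * 2 ^ (1 + γ) * (1 - r) ^ (-(1 + γ))) :=
    calc ∑ j ∈ Finset.range N, (∑ k ∈ Finset.Icc 1 (j + 1), (k : ℝ) * c k) * r ^ j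
        ≤ ∑ j ∈ Finset.range N, M * (((j : ℝ) + 1) ^ γ * r ^ j) := by
          refine Finset.sum_le_sum fun j _ => ?_
          rw [← mul_assoc]
          refine mul_le_mul_of_nonneg_right ?_ (by positivity)
          exact_mod_cast hS (j + 1)
      _ ≤ M * (2 ^ γ * (γ ^ γ + 1) * 2 ^ (1 + γ) * (1 - r) ^ (-(1 + γ))) := by
          rw [← Finset.mul_sum]
          exact mul_le_mul_of_nonneg_left (sum_range_add_one_rpow_mul_pow_le hγ hr0 hr1 N) hM
  have hpow : (1 - r) * (1 - r) ^ (-(1 + γ)) = (1 - r) ^ (-γ) := by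
    rw [← Real.rpow_one_add' h1r.le (by linarith)]; ring_nf
  calc (∑ k ∈ Finset.Icc 1 N, (k : ℝ) * c k) * r ^ N
        + (1 - r) * ∑ j ∈ Finset.range N, (∑ k ∈ Finset.Icc 1 (j + 1), (k : ℝ) * c k) * r ^ j
      ≤ M * (γ ^ γ * (1 - r) ^ (-γ))
        + (1 - r) * (M * (2 ^ γ * (γ ^ γ + 1) * 2 ^ (1 + γ) * (1 - r) ^ (-(1 + γ)))) :=
        add_le_add hboundary (mul_le_mul_of_nonneg_left hbulk h1r.le)
    _ = M * (γ ^ γ + 2 ^ γ * (γ ^ γ + 1) * 2 ^ (1 + γ)) * (1 - r) ^ (-γ) := by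
        rw [← hpow]; ring

theorem one_sub_sq_rpow_mul_powerSeriesDeriv_le (hγ : 0 < γ) (hc : ∀ n, 0 ≤ c n) {M : ℝ}
    (hM : ∀ n : ℕ, 1 ≤ n → (n : ℝ) ^ (-γ) * ∑ k ∈ Finset.Icc 1 n, (k : ℝ) * c k ≤ M)
    {r : ℝ} (hr : r ∈ Ico (0:ℝ) 1) :
    (1 - r ^ 2) ^ γ * powerSeriesDeriv c r
      ≤ 2 ^ γ * (M * (γ ^ γ + 2 ^ γ * (γ ^ γ + 1) * 2 ^ (1 + γ))) := by
  obtain ⟨hr0, hr1⟩ := hr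
  have h1r : 0 < 1 - r := by linarith
  have hS : ∀ n : ℕ, ∑ k ∈ Finset.Icc 1 n, (k : ℝ) * c k ≤ M * (n : ℝ) ^ γ := fun n => by
    rcases Nat.eq_zero_or_pos n with rfl | hn
    · simp [Real.zero_rpow hγ.ne']
    · have := hM n hn
      have hn : (0 : ℝ) < n := by exact_mod_cast hn
      rwa [Real.rpow_neg hn.le, inv_mul_le_iff₀ (by positivity), mul_comm] at this
  set K := M * (γ ^ γ + 2 ^ γ * (γ ^ γ + 1) * 2 ^ (1 + γ))
  calc (1 - r ^ 2) ^ γ * powerSeriesDeriv c r ≤ (2 * (1 - r)) ^ γ * (K * (1 - r) ^ (-γ)) :=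
        mul_le_mul (Real.rpow_le_rpow (by nlinarith) (by nlinarith) hγ.le)
          (powerSeriesDeriv_le hγ hc hS hr0 hr1) (powerSeriesDeriv_nonneg hc hr0) (by positivity)
    _ = 2 ^ γ * K := by
        rw [Real.mul_rpow (by norm_num) h1r.le, Real.rpow_neg h1r.le]
        field_simp

end Coefficients

theorem stmt6 (γ : ℝ) (hγ : 0 < γ) (f : ℂ → ℂ) (c : ℕ → ℝ) (hc : ∀ n, 0 ≤ c n)
    (hf : ∀ z ∈ Metric.ball (0:ℂ) 1, HasSum (fun n : ℕ => (c n : ℂ) * z ^ n) (f z)) :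
    MemBloch (fun s => (1 - s ^ 2) ^ γ) f ↔
      ∃ M : ℝ, ∀ n : ℕ, 1 ≤ n →
        (n : ℝ) ^ (-γ) * ∑ k ∈ Finset.Icc 1 n, (k : ℝ) * c k ≤ M := by
  have hweight : ∀ r ∈ Ico (0:ℝ) 1, 0 ≤ (1 - r ^ 2) ^ γ := fun r ⟨hr0, hr1⟩ =>
    Real.rpow_nonneg (by nlinarith) γ
  rw [memBloch_iff_of_hasSum hweight hc hf]
  constructor
  · rintro ⟨C, hC⟩
    exact ⟨_, fun n hn => rpow_neg_mul_sum_Icc_le hγ.le hc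
      (fun r hr => summable_succ_mul_mul_pow_of_hasSum hc hf hr.1 hr.2) hC hn⟩
  · rintro ⟨M, hM⟩
    exact ⟨_, fun r hr => one_sub_sq_rpow_mul_powerSeriesDeriv_le hγ hc hM hr⟩
end

section
/- Let γ > 0 and let f(z) = ∑_{n≥0} a_n z^n be analytic on the unit disk with (a_n) nonnegative and non-increasing. Then f ∈ B^γ if and only if sup_{n≥1} n^{2-γ} a_n < ∞. -/
open MeasureTheory Set Filter

/-
On `[0, 1)` the derivative `f'(r) = ∑ (n + 1) a_{n+1} r ^ n` has nonnegative terms. Keeping the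
first `n` of them and using the monotonicity of `(a_n)` gives `f'(r) ≥ n ^ 2 a_n / 4` at
`r = 1 - 1 / (2n)`, where `(1 - r ^ 2) ^ γ ≥ (2n) ^ (-γ)`. Conversely, `a_n ≤ M n ^ (γ - 2)` bounds
`|f'(z)|` by `M ∑ (n + 1) ^ (γ - 1) |z| ^ n`, and `∑ (n + 1) ^ s r ^ n = O((1 - r) ^ (-(s + 1)))`
for every `s > -1`.
-/

open Real Metric
open scoped Nat

lemma rpow_le_factorial_mul_exp {s x : ℝ} (hs : 0 ≤ s) (hx : 0 ≤ x) :
    x ^ s ≤ ⌈s⌉₊ ! * exp (1 + x) := by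
  have hk : x ^ s ≤ (1 + x) ^ ⌈s⌉₊ :=
    calc x ^ s ≤ (1 + x) ^ s := by gcongr; linarith
      _ ≤ (1 + x) ^ (⌈s⌉₊ : ℝ) :=
        rpow_le_rpow_of_exponent_le (by linarith) (Nat.le_ceil s)
      _ = (1 + x) ^ ⌈s⌉₊ := rpow_natCast _ _
  have := pow_div_factorial_le_exp (1 + x) (by linarith) ⌈s⌉₊
  rw [div_le_iff₀ (by positivity)] at this
  linarith

lemma rpow_mul_pow_le_div {s q : ℝ} (hs : 0 ≤ s) (hq0 : 0 ≤ q) (hq1 : q < 1) (n : ℕ) :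
    ((n : ℝ) + 1) ^ s * q ^ n ≤ ⌈s⌉₊ ! * exp 2 / (1 - q) ^ s := by
  have h1q : 0 < 1 - q := by linarith
  set x := ((n : ℝ) + 1) * (1 - q)
  -- `q ^ n ≤ exp (1 - x)` cancels the growth `x ^ s ≤ ⌈s⌉! exp (1 + x)`
  have hqn : q ^ n ≤ exp (1 - x) := by
    calc q ^ n ≤ exp (-(1 - q)) ^ n := by
          gcongr; linarith [one_sub_le_exp_neg (1 - q)]
      _ = exp (1 - x) * exp (-q) := by
          rw [← exp_nat_mul, ← exp_add]; congr 1; simp only [x]; ring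
      _ ≤ exp (1 - x) := mul_le_of_le_one_right (exp_nonneg _) (exp_le_one_iff.2 (by linarith))
  have hx : x ^ s ≤ ⌈s⌉₊ ! * exp (1 + x) := rpow_le_factorial_mul_exp hs (by positivity)
  rw [le_div_iff₀ (rpow_pos_of_pos h1q s)]
  calc ((n : ℝ) + 1) ^ s * q ^ n * (1 - q) ^ s = x ^ s * q ^ n := by
        rw [mul_rpow (by positivity) h1q.le]; ring
    _ ≤ ⌈s⌉₊ ! * exp (1 + x) * exp (1 - x) := by gcongr
    _ = ⌈s⌉₊ ! * exp 2 := by rw [mul_assoc, ← exp_add]; ring_nf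

lemma exists_tsum_rpow_mul_pow_le_of_nonneg {s : ℝ} (hs : 0 ≤ s) :
    ∃ C, ∀ r : ℝ, 0 ≤ r → r < 1 → Summable (fun n : ℕ => ((n : ℝ) + 1) ^ s * r ^ n) ∧
      ∑' n : ℕ, ((n : ℝ) + 1) ^ s * r ^ n ≤ C / (1 - r) ^ (s + 1) := by
  set K := ⌈s⌉₊ ! * exp 2
  refine ⟨K * 2 ^ (s + 1), fun r hr0 hr1 => ?_⟩
  -- split `r ^ n = q ^ n * q ^ n` with `q = √r`: one factor absorbs `(n + 1) ^ s`, the other sums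
  set q := √r
  have hq0 : 0 ≤ q := sqrt_nonneg r
  have hq1 : q < 1 := (sqrt_lt' one_pos).2 (by simpa using hr1)
  have h1q : 0 < 1 - q := by linarith
  have hr : r = q ^ 2 := (sq_sqrt hr0).symm
  have hgeom : HasSum (fun n : ℕ => K / (1 - q) ^ s * q ^ n) (K / (1 - q) ^ s * (1 - q)⁻¹) :=
    (hasSum_geometric_of_lt_one hq0 hq1).mul_left _
  have hle : ∀ n : ℕ, ((n : ℝ) + 1) ^ s * r ^ n ≤ K / (1 - q) ^ s * q ^ n := fun n => by
    rw [hr, ← pow_mul, two_mul, pow_add, ← mul_assoc]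
    gcongr
    exact rpow_mul_pow_le_div hs hq0 hq1 n
  have hsum : Summable (fun n : ℕ => ((n : ℝ) + 1) ^ s * r ^ n) :=
    hgeom.summable.of_nonneg_of_le (fun n => by positivity) hle
  refine ⟨hsum, (hasSum_le hle hsum.hasSum hgeom).trans ?_⟩
  have h2q : 1 - r ≤ 2 * (1 - q) := by nlinarith
  calc K / (1 - q) ^ s * (1 - q)⁻¹ = K * 2 ^ (s + 1) / (2 * (1 - q)) ^ (s + 1) := by
        rw [mul_rpow zero_le_two h1q.le, rpow_add_one h1q.ne']
        field_simp
    _ ≤ K * 2 ^ (s + 1) / (1 - r) ^ (s + 1) := by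
        gcongr

lemma hasSum_sub_mul_pow {b : ℕ → ℝ} (hb0 : b 0 = 0) {r : ℝ}
    (hb : Summable (fun n : ℕ => b (n + 1) * r ^ n)) :
    HasSum (fun n : ℕ => (b (n + 1) - b n) * r ^ n) ((1 - r) * ∑' n : ℕ, b (n + 1) * r ^ n) := by
  have hshift : HasSum (fun n : ℕ => b n * r ^ n) (r * ∑' n : ℕ, b (n + 1) * r ^ n) := by
    rw [← hasSum_nat_add_iff' 1]
    simp only [Finset.range_one, Finset.sum_singleton, hb0, zero_mul, sub_zero]
    have h := hb.hasSum.mul_left r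
    rwa [show (fun n : ℕ => r * (b (n + 1) * r ^ n)) = fun n => b (n + 1) * r ^ (n + 1) from
      funext fun n => by ring] at h
  have h := hb.hasSum.sub hshift
  rwa [← one_sub_mul, show (fun n : ℕ => b (n + 1) * r ^ n - b n * r ^ n) =
    fun n => (b (n + 1) - b n) * r ^ n from funext fun n => by ring] at h

lemma rpow_sub_one_mul_le_rpow_sub_rpow {σ : ℝ} (hσ0 : 0 ≤ σ) (hσ1 : σ ≤ 1) (n : ℕ) :
    σ * ((n : ℝ) + 1) ^ (σ - 1) ≤ ((n : ℝ) + 1) ^ σ - (n : ℝ) ^ σ := by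
  have hn : (0 : ℝ) < n + 1 := by positivity
  have hbern := rpow_one_add_le_one_add_mul_self (s := -1 / ((n : ℝ) + 1))
    (by rw [neg_div, neg_le_neg_iff, div_le_one hn]; linarith) hσ0 hσ1
  have hbase : 1 + -1 / ((n : ℝ) + 1) = n / (n + 1) := by field_simp; ring
  rw [hbase, div_rpow (Nat.cast_nonneg n) hn.le, div_le_iff₀ (rpow_pos_of_pos hn σ)] at hbern
  rw [rpow_sub_one hn.ne']
  calc σ * (((n : ℝ) + 1) ^ σ / (n + 1))
        = ((n : ℝ) + 1) ^ σ - (1 + σ * (-1 / (n + 1))) * (n + 1) ^ σ := by ring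
    _ ≤ _ := by linarith

lemma exists_tsum_rpow_mul_pow_le_of_nonpos {s : ℝ} (hs1 : -1 < s) (hs0 : s ≤ 0) :
    ∃ C, ∀ r : ℝ, 0 ≤ r → r < 1 → Summable (fun n : ℕ => ((n : ℝ) + 1) ^ s * r ^ n) ∧
      ∑' n : ℕ, ((n : ℝ) + 1) ^ s * r ^ n ≤ C / (1 - r) ^ (s + 1) := by
  obtain ⟨C, hC⟩ := exists_tsum_rpow_mul_pow_le_of_nonneg (s := s + 1) (by linarith)
  refine ⟨C / (s + 1), fun r hr0 hr1 => ?_⟩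
  obtain ⟨hsum', hle'⟩ := hC r hr0 hr1
  have h1r : 0 < 1 - r := by linarith
  have hs : 0 < s + 1 := by linarith
  have hsum : Summable (fun n : ℕ => ((n : ℝ) + 1) ^ s * r ^ n) :=
    (summable_geometric_of_lt_one hr0 hr1).of_nonneg_of_le (fun n => by positivity) fun n =>
      mul_le_of_le_one_left (by positivity) (rpow_le_one_of_one_le_of_nonpos (by simp) hs0)
  -- Abel summation against the Bernoulli bound reduces the estimate to the exponent `s + 1 ≥ 0`
  have habel := hasSum_sub_mul_pow (b := fun n : ℕ => (n : ℝ) ^ (s + 1)) (by simp [hs.ne'])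
    (r := r) (by simpa using hsum')
  push_cast at habel
  have hbern : ∀ n : ℕ, (s + 1) * (((n : ℝ) + 1) ^ s * r ^ n)
      ≤ (((n : ℝ) + 1) ^ (s + 1) - (n : ℝ) ^ (s + 1)) * r ^ n := fun n => by
    rw [← mul_assoc]
    gcongr
    simpa using rpow_sub_one_mul_le_rpow_sub_rpow hs.le (by linarith) n
  have key : (s + 1) * ∑' n : ℕ, ((n : ℝ) + 1) ^ s * r ^ n ≤ C / (1 - r) ^ (s + 1) :=
    calc (s + 1) * ∑' n : ℕ, ((n : ℝ) + 1) ^ s * r ^ n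
        ≤ (1 - r) * ∑' n : ℕ, ((n : ℝ) + 1) ^ (s + 1) * r ^ n := by
          rw [← tsum_mul_left]
          exact hasSum_le hbern (hsum.mul_left _).hasSum habel
      _ ≤ (1 - r) * (C / (1 - r) ^ (s + 1 + 1)) := by gcongr
      _ = C / (1 - r) ^ (s + 1) := by
          rw [rpow_add_one h1r.ne']
          field_simp
  refine ⟨hsum, ?_⟩
  rw [div_right_comm, le_div_iff₀ hs, mul_comm]
  exact key

lemma exists_tsum_rpow_mul_pow_le {s : ℝ} (hs : -1 < s) :
    ∃ C, ∀ r : ℝ, 0 ≤ r → r < 1 → Summable (fun n : ℕ => ((n : ℝ) + 1) ^ s * r ^ n) ∧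
      ∑' n : ℕ, ((n : ℝ) + 1) ^ s * r ^ n ≤ C / (1 - r) ^ (s + 1) := by
  rcases le_total 0 s with hs0 | hs0
  · exact exists_tsum_rpow_mul_pow_le_of_nonneg hs0
  · exact exists_tsum_rpow_mul_pow_le_of_nonpos hs hs0

lemma hasSum_deriv_of_hasSum_pow {a : ℕ → ℂ} {A : ℝ} (ha : ∀ n, ‖a n‖ ≤ A) {f : ℂ → ℂ}
    (hf : ∀ z ∈ ball (0 : ℂ) 1, HasSum (fun n => a n * z ^ n) (f z)) {z : ℂ}
    (hz : z ∈ ball (0 : ℂ) 1) :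
    DifferentiableAt ℂ f z ∧
      HasSum (fun n : ℕ => ((n : ℂ) + 1) * a (n + 1) * z ^ n) (deriv f z) := by
  obtain ⟨R, hzR, hR1⟩ := exists_between (mem_ball_zero_iff.1 hz)
  have hR0 : 0 ≤ R := (norm_nonneg z).trans hzR.le
  have hzU : z ∈ ball (0 : ℂ) R := mem_ball_zero_iff.2 hzR
  have hu : Summable (fun n : ℕ => A * R ^ n) := (summable_geometric_of_lt_one hR0 hR1).mul_left A
  have hbound : ∀ (n : ℕ) (w : ℂ), w ∈ ball (0 : ℂ) R → ‖a n * w ^ n‖ ≤ A * R ^ n := by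
    intro n w hw
    rw [norm_mul, norm_pow]
    gcongr
    · exact (norm_nonneg _).trans (ha 0)
    · exact ha n
    · exact (mem_ball_zero_iff.1 hw).le
  have hdiff : ∀ n : ℕ, DifferentiableOn ℂ (fun w => a n * w ^ n) (ball 0 R) := fun n => by
    fun_prop
  have heq : f =ᶠ[nhds z] fun w => ∑' n, a n * w ^ n := by
    filter_upwards [isOpen_ball.mem_nhds hz] with w hw
    exact (hf w hw).tsum_eq.symm
  refine ⟨((Complex.differentiableOn_tsum_of_summable_norm hu hdiff isOpen_ball
    hbound).differentiableAt (isOpen_ball.mem_nhds hzU)).congr_of_eventuallyEq heq, ?_⟩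
  have h := Complex.hasSum_deriv_of_summable_norm hu hdiff isOpen_ball hbound hzU
  rw [← heq.deriv_eq, ← hasSum_nat_add_iff' 1] at h
  simpa [mul_comm, mul_left_comm, mul_assoc] using h

lemma hasSum_deriv_of_antitone {c : ℕ → ℝ} (hc : ∀ n, 0 ≤ c n) (hmono : Antitone c) {f : ℂ → ℂ}
    (hf : ∀ z ∈ ball (0 : ℂ) 1, HasSum (fun n : ℕ => (c n : ℂ) * z ^ n) (f z)) {z : ℂ}
    (hz : z ∈ ball (0 : ℂ) 1) :
    DifferentiableAt ℂ f z ∧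
      HasSum (fun n : ℕ => ((((n : ℝ) + 1) * c (n + 1) : ℝ) : ℂ) * z ^ n) (deriv f z) := by
  have hbdd : ∀ n, ‖(c n : ℂ)‖ ≤ c 0 := fun n => by
    rw [Complex.norm_real, norm_of_nonneg (hc n)]; exact hmono (Nat.zero_le n)
  simpa using hasSum_deriv_of_hasSum_pow hbdd hf hz

lemma sq_div_two_le_sum_range (n : ℕ) :
    (n : ℝ) ^ 2 / 2 ≤ ∑ m ∈ Finset.range n, ((m : ℝ) + 1) := by
  induction n with
  | zero => simp
  | succ n ih => rw [Finset.sum_range_succ]; push_cast; nlinarith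

lemma sq_div_two_mul_le_sum_range {c : ℕ → ℝ} (hc : ∀ n, 0 ≤ c n) (hmono : Antitone c) {r : ℝ}
    (hr0 : 0 ≤ r) (hr1 : r ≤ 1) (n : ℕ) :
    (n : ℝ) ^ 2 / 2 * (c n * r ^ n) ≤ ∑ m ∈ Finset.range n, ((m : ℝ) + 1) * c (m + 1) * r ^ m := by
  calc (n : ℝ) ^ 2 / 2 * (c n * r ^ n)
      ≤ ∑ m ∈ Finset.range n, ((m : ℝ) + 1) * (c n * r ^ n) := by
        rw [← Finset.sum_mul]
        exact mul_le_mul_of_nonneg_right (sq_div_two_le_sum_range n)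
          (mul_nonneg (hc n) (pow_nonneg hr0 n))
    _ ≤ ∑ m ∈ Finset.range n, ((m : ℝ) + 1) * c (m + 1) * r ^ m := by
        refine Finset.sum_le_sum fun m hm => ?_
        rw [mul_assoc]
        have hm : m < n := Finset.mem_range.1 hm
        exact mul_le_mul_of_nonneg_left (mul_le_mul (hmono (by omega))
          (pow_le_pow_of_le_one hr0 hr1 hm.le) (pow_nonneg hr0 n) (hc _)) (by positivity)

lemma one_half_le_one_sub_one_div_two_mul_pow (n : ℕ) : 1 / 2 ≤ (1 - 1 / (2 * n : ℝ)) ^ n := by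
  rcases n.eq_zero_or_pos with rfl | hn
  · norm_num
  have hδ : 1 / (2 * (n : ℝ)) ≤ 1 / 2 := by gcongr; norm_cast; omega
  have h : 1 - n * (1 / (2 * n)) ≤ (1 - 1 / (2 * n : ℝ)) ^ n := by
    simpa only [mul_neg, ← sub_eq_add_neg] using
      one_add_mul_le_pow (a := -(1 / (2 * (n : ℝ)))) (by linarith) n
  rw [show (n : ℝ) * (1 / (2 * n)) = 1 / 2 by field_simp] at h
  linarith

lemma exists_rpow_mul_le_of_memBloch {γ : ℝ} (hγ : 0 ≤ γ) {c : ℕ → ℝ} (hc : ∀ n, 0 ≤ c n)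
    (hmono : Antitone c) {f : ℂ → ℂ}
    (hf : ∀ z ∈ ball (0 : ℂ) 1, HasSum (fun n : ℕ => (c n : ℂ) * z ^ n) (f z))
    (hB : MemBloch (fun s => (1 - s ^ 2) ^ γ) f) :
    ∃ M : ℝ, ∀ n : ℕ, 1 ≤ n → (n : ℝ) ^ (2 - γ) * c n ≤ M := by
  obtain ⟨-, S, hS⟩ := hB
  refine ⟨4 * 2 ^ γ * S, fun n hn => ?_⟩
  have hn0 : (0 : ℝ) < n := by exact_mod_cast hn
  set r : ℝ := 1 - 1 / (2 * n)
  have hδ0 : 0 < 1 / (2 * (n : ℝ)) := by positivity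
  have hδ1 : 1 / (2 * (n : ℝ)) ≤ 1 / 2 := by gcongr; norm_cast; omega
  have hr0 : 0 ≤ r := by linarith
  have hr1 : r < 1 := by linarith
  have hrn : 1 / 2 ≤ r ^ n := one_half_le_one_sub_one_div_two_mul_pow n
  have hweight : 1 / (2 * n) ≤ 1 - r ^ 2 := by nlinarith
  have hrball : (r : ℂ) ∈ ball (0 : ℂ) 1 := by
    rwa [mem_ball_zero_iff, Complex.norm_real, norm_of_nonneg hr0]
  have hre := Complex.hasSum_re (hasSum_deriv_of_antitone hc hmono hf hrball).2
  simp only [← Complex.ofReal_pow, ← Complex.ofReal_mul, Complex.ofReal_re] at hre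
  have hderiv : (n : ℝ) ^ 2 / 2 * (c n * (1 / 2)) ≤ ‖deriv f r‖ :=
    calc (n : ℝ) ^ 2 / 2 * (c n * (1 / 2)) ≤ (n : ℝ) ^ 2 / 2 * (c n * r ^ n) := by
          gcongr; exact hc n
      _ ≤ ∑ m ∈ Finset.range n, ((m : ℝ) + 1) * c (m + 1) * r ^ m :=
          sq_div_two_mul_le_sum_range hc hmono hr0 hr1.le n
      _ ≤ (deriv f r).re := sum_le_hasSum _ (fun m _ => by have := hc (m + 1); positivity) hre
      _ ≤ ‖deriv f r‖ := Complex.re_le_norm _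
  have hSr := hS ⟨⟨r, hrball⟩, rfl⟩
  simp only [Complex.norm_real, norm_of_nonneg hr0] at hSr
  have key : (1 / (2 * n)) ^ γ * ((n : ℝ) ^ 2 / 2 * (c n * (1 / 2))) ≤ S :=
    le_trans (by gcongr; exacts [by have := hc n; positivity, rpow_nonneg (by nlinarith) γ]) hSr
  rw [one_div, inv_rpow (by positivity), mul_rpow zero_le_two hn0.le,
    inv_mul_le_iff₀ (by positivity)] at key
  rw [rpow_sub hn0, rpow_two, div_mul_eq_mul_div, div_le_iff₀ (by positivity)]
  linarith

lemma memBloch_of_rpow_mul_le {γ : ℝ} (hγ : 0 < γ) {c : ℕ → ℝ} (hc : ∀ n, 0 ≤ c n)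
    (hmono : Antitone c) {f : ℂ → ℂ}
    (hf : ∀ z ∈ ball (0 : ℂ) 1, HasSum (fun n : ℕ => (c n : ℂ) * z ^ n) (f z)) {M : ℝ}
    (hM : ∀ n : ℕ, 1 ≤ n → (n : ℝ) ^ (2 - γ) * c n ≤ M) :
    MemBloch (fun s => (1 - s ^ 2) ^ γ) f := by
  have hM0 : 0 ≤ M := by
    have h := hM 1 le_rfl
    rw [Nat.cast_one, one_rpow, one_mul] at h
    exact (hc 1).trans h
  have hterm : ∀ m : ℕ, ((m : ℝ) + 1) * c (m + 1) ≤ M * ((m : ℝ) + 1) ^ (γ - 1) := fun m => by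
    have hm : (0 : ℝ) < m + 1 := by positivity
    have h := hM (m + 1) (by omega)
    push_cast at h
    calc ((m : ℝ) + 1) * c (m + 1)
        = ((m : ℝ) + 1) ^ (γ - 1) * (((m : ℝ) + 1) ^ (2 - γ) * c (m + 1)) := by
          rw [← mul_assoc, ← rpow_add hm]; norm_num
      _ ≤ ((m : ℝ) + 1) ^ (γ - 1) * M := by gcongr
      _ = M * ((m : ℝ) + 1) ^ (γ - 1) := mul_comm _ _
  obtain ⟨C, hC⟩ := exists_tsum_rpow_mul_pow_le (s := γ - 1) (by linarith)
  refine ⟨fun z hz => (hasSum_deriv_of_antitone hc hmono hf hz).1.differentiableWithinAt,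
    2 ^ γ * (M * C), ?_⟩
  rintro _ ⟨⟨z, hz⟩, rfl⟩
  set t := ‖z‖
  have ht0 : 0 ≤ t := norm_nonneg z
  have ht1 : t < 1 := mem_ball_zero_iff.1 hz
  have h1t : 0 < 1 - t := by linarith
  obtain ⟨hsum, hle⟩ := hC t ht0 ht1
  rw [sub_add_cancel] at hle
  have hderiv : ‖deriv f z‖ ≤ M * (C / (1 - t) ^ γ) := by
    refine ((hasSum_deriv_of_antitone hc hmono hf hz).2.norm_le_of_bounded
      (hsum.mul_left M).hasSum fun m => ?_).trans ?_
    · rw [norm_mul, Complex.norm_real, norm_pow,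
        norm_of_nonneg (by have := hc (m + 1); positivity), ← mul_assoc]
      exact mul_le_mul_of_nonneg_right (hterm m) (pow_nonneg (norm_nonneg z) m)
    · rw [tsum_mul_left]
      gcongr
  have hweight : (1 - t ^ 2) ^ γ ≤ 2 ^ γ * (1 - t) ^ γ := by
    rw [← mul_rpow zero_le_two h1t.le]
    gcongr <;> nlinarith
  calc (1 - t ^ 2) ^ γ * ‖deriv f z‖ ≤ 2 ^ γ * (1 - t) ^ γ * (M * (C / (1 - t) ^ γ)) := by
        gcongr
    _ = 2 ^ γ * (M * C) := by field_simp

theorem stmt8 (γ : ℝ) (hγ : 0 < γ) (f : ℂ → ℂ) (c : ℕ → ℝ) (hc : ∀ n, 0 ≤ c n)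
    (hmono : Antitone c)
    (hf : ∀ z ∈ Metric.ball (0:ℂ) 1, HasSum (fun n : ℕ => (c n : ℂ) * z ^ n) (f z)) :
    MemBloch (fun s => (1 - s ^ 2) ^ γ) f ↔
      ∃ M : ℝ, ∀ n : ℕ, 1 ≤ n → (n : ℝ) ^ (2 - γ) * c n ≤ M :=
  ⟨exists_rpow_mul_le_of_memBloch hγ.le hc hmono hf,
    fun ⟨_, hM⟩ => memBloch_of_rpow_mul_le hγ hc hmono hf hM⟩
end

section
/- Let ω be a normal weight on [0,1), μ a positive Borel measure on [0,1), and α > -1. If ∫_0^1 (ω̃(t) + 1) dμ(t) < ∞, where ω̃(t) = ∫_0^t ds/ω(s), then for every f ∈ B_ω the integral I_{μ,α+1}(f)(z) = ∫_0^1 f(t)/(1-tz)^{α+1} dμ(t) converges absolutely for every z in the unit disk and defines an analytic function on the disk, with the uniform bound |I_{μ,α+1}(f)(z)| ≤ C‖f‖_{B_ω}/(1-r)^{α+1} for |z| ≤ r < 1. -/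
open MeasureTheory Set Filter

/-! Along the radius, `f t - f 0 = ∫₀ᵗ f'` and `‖f' s‖ ≤ ‖f‖_{B_ω} / ω s`, so
`‖f t‖ ≤ ‖f‖_{B_ω} (ω̃ t + 1)` and `f` restricted to `[0, 1)` is `μ`-integrable. For `‖z‖ ≤ r < 1`
and `t ∈ [0, 1]` one has `‖1 - t z‖ ≥ 1 - r`, which bounds the kernel `(1 - t z)^{-(α+1)}` by
`(1 - r)^{-(α+1)}` and its `z`-derivative uniformly near every point of the disc; this gives the
estimate, and holomorphy by differentiation under the integral sign. -/

section Kernel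

variable {t r : ℝ} {z : ℂ}

lemma ofReal_mem_ball_zero_one_s10 (ht : t ∈ Ico (0 : ℝ) 1) :
    (t : ℂ) ∈ Metric.ball (0 : ℂ) 1 := by
  rw [mem_ball_zero_iff, Complex.norm_of_nonneg ht.1]
  exact ht.2

lemma norm_ofReal_mul_le (ht₀ : 0 ≤ t) (ht₁ : t ≤ 1) (hz : ‖z‖ ≤ r) : ‖(t : ℂ) * z‖ ≤ r := by
  rw [norm_mul, Complex.norm_of_nonneg ht₀]
  nlinarith [norm_nonneg z]

lemma sub_le_norm_one_sub_ofReal_mul (ht₀ : 0 ≤ t) (ht₁ : t ≤ 1) (hz : ‖z‖ ≤ r) :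
    1 - r ≤ ‖1 - (t : ℂ) * z‖ := by
  have := norm_sub_norm_le (1 : ℂ) ((t : ℂ) * z)
  rw [norm_one] at this
  linarith [norm_ofReal_mul_le ht₀ ht₁ hz]

lemma one_sub_ofReal_mul_mem_slitPlane (ht₀ : 0 ≤ t) (ht₁ : t ≤ 1) (hz : ‖z‖ < 1) :
    1 - (t : ℂ) * z ∈ Complex.slitPlane := by
  rw [sub_eq_add_neg]
  exact Complex.mem_slitPlane_of_norm_lt_one
    ((norm_neg _).trans_le (norm_ofReal_mul_le ht₀ ht₁ le_rfl) |>.trans_lt hz)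

lemma norm_one_sub_ofReal_mul_cpow_le {γ : ℝ} (hγ : γ ≤ 0) (ht₀ : 0 ≤ t) (ht₁ : t ≤ 1)
    (hz : ‖z‖ ≤ r) (hr : r < 1) : ‖(1 - (t : ℂ) * z) ^ (γ : ℂ)‖ ≤ (1 - r) ^ γ := by
  rw [Complex.norm_cpow_real]
  exact Real.rpow_le_rpow_of_nonpos (by linarith) (sub_le_norm_one_sub_ofReal_mul ht₀ ht₁ hz) hγ

lemma norm_div_one_sub_ofReal_mul_cpow_le {β : ℝ} (hβ : 0 ≤ β) (ht₀ : 0 ≤ t) (ht₁ : t ≤ 1)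
    (hz : ‖z‖ ≤ r) (hr : r < 1) (w : ℂ) :
    ‖w / (1 - (t : ℂ) * z) ^ (β : ℂ)‖ ≤ ‖w‖ * (1 - r) ^ (-β) := by
  rw [div_eq_mul_inv, ← Complex.cpow_neg, norm_mul, ← Complex.ofReal_neg]
  gcongr
  exact norm_one_sub_ofReal_mul_cpow_le (by linarith) ht₀ ht₁ hz hr

lemma hasDerivAt_div_one_sub_ofReal_mul_cpow {β : ℝ} (ht₀ : 0 ≤ t) (ht₁ : t ≤ 1)
    (hz : ‖z‖ < 1) (w : ℂ) :
    HasDerivAt (fun z : ℂ => w / (1 - (t : ℂ) * z) ^ (β : ℂ))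
      (w * (β * t * (1 - (t : ℂ) * z) ^ (-(β : ℂ) - 1))) z := by
  have hlin : HasDerivAt (fun z : ℂ => 1 - (t : ℂ) * z) (-(t : ℂ)) z := by
    simpa using ((hasDerivAt_id z).const_mul (t : ℂ)).const_sub (1 : ℂ)
  have hpow := (hlin.cpow_const (c := -(β : ℂ))
    (one_sub_ofReal_mul_mem_slitPlane ht₀ ht₁ hz)).const_mul w
  rw [show (fun z : ℂ => w / (1 - (t : ℂ) * z) ^ (β : ℂ)) =
      fun z => w * (1 - (t : ℂ) * z) ^ (-(β : ℂ)) from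
    funext fun y => by rw [Complex.cpow_neg, div_eq_mul_inv]]
  exact hpow.congr_deriv (by ring)

end Kernel

section HilbertKernelIntegral

variable {μ : Measure ℝ} {g : ℝ → ℂ} {β : ℝ}

lemma aestronglyMeasurable_div_one_sub_ofReal_mul_cpow (hg : AEStronglyMeasurable g μ)
    (z : ℂ) (γ : ℂ) : AEStronglyMeasurable (fun t : ℝ => g t / (1 - (t : ℂ) * z) ^ γ) μ :=
  (hg.aemeasurable.div (by fun_prop : Measurable fun t : ℝ => (1 - (t : ℂ) * z) ^ γ).aemeasurable)
    |>.aestronglyMeasurable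

lemma integrableOn_div_one_sub_ofReal_mul_cpow (hβ : 0 ≤ β) (hg : IntegrableOn g (Ico 0 1) μ)
    {z : ℂ} (hz : ‖z‖ < 1) :
    IntegrableOn (fun t : ℝ => g t / (1 - (t : ℂ) * z) ^ (β : ℂ)) (Ico 0 1) μ :=
  (hg.norm.mul_const ((1 - ‖z‖) ^ (-β))).mono'
    (aestronglyMeasurable_div_one_sub_ofReal_mul_cpow hg.aestronglyMeasurable z _)
    (ae_restrict_of_forall_mem measurableSet_Ico fun t ht =>
      norm_div_one_sub_ofReal_mul_cpow_le hβ ht.1 ht.2.le le_rfl hz (g t))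

lemma norm_setIntegral_div_one_sub_ofReal_mul_cpow_le (hβ : 0 ≤ β)
    (hg : IntegrableOn g (Ico 0 1) μ) {z : ℂ} {r : ℝ} (hz : ‖z‖ ≤ r) (hr : r < 1) :
    ‖∫ t in Ico (0 : ℝ) 1, g t / (1 - (t : ℂ) * z) ^ (β : ℂ) ∂μ‖ ≤
      (∫ t in Ico (0 : ℝ) 1, ‖g t‖ ∂μ) / (1 - r) ^ β := by
  rw [div_eq_mul_inv, ← Real.rpow_neg (by linarith), ← integral_mul_const]
  exact norm_integral_le_of_norm_le (hg.norm.mul_const _)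
    (ae_restrict_of_forall_mem measurableSet_Ico fun t ht =>
      norm_div_one_sub_ofReal_mul_cpow_le hβ ht.1 ht.2.le hz hr (g t))

lemma differentiableOn_setIntegral_div_one_sub_ofReal_mul_cpow (hβ : 0 ≤ β)
    (hg : IntegrableOn g (Ico 0 1) μ) :
    DifferentiableOn ℂ (fun z : ℂ => ∫ t in Ico (0 : ℝ) 1, g t / (1 - (t : ℂ) * z) ^ (β : ℂ) ∂μ)
      (Metric.ball 0 1) := by
  intro z₀ hz₀
  rw [mem_ball_zero_iff] at hz₀
  set r := (1 + ‖z₀‖) / 2 with hr_def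
  have hr : r < 1 := by linarith
  have hball : ∀ z ∈ Metric.ball z₀ ((1 - ‖z₀‖) / 2), ‖z‖ ≤ r := fun z hz => by
    have := norm_le_norm_add_norm_sub' z z₀
    rw [Metric.mem_ball, dist_eq_norm] at hz
    linarith
  have hderiv_meas : AEStronglyMeasurable
      (fun t : ℝ => g t * (β * t * (1 - (t : ℂ) * z₀) ^ (-(β : ℂ) - 1))) (μ.restrict (Ico 0 1)) :=
    hg.aestronglyMeasurable.mul (Measurable.aestronglyMeasurable (by fun_prop))
  have hderiv_bound : ∀ t ∈ Ico (0 : ℝ) 1, ∀ z ∈ Metric.ball z₀ ((1 - ‖z₀‖) / 2),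
      ‖g t * (β * t * (1 - (t : ℂ) * z) ^ (-(β : ℂ) - 1))‖ ≤ ‖g t‖ * (β * (1 - r) ^ (-β - 1)) := by
    intro t ht z hz
    have hpow : ‖(1 - (t : ℂ) * z) ^ (-(β : ℂ) - 1)‖ ≤ (1 - r) ^ (-β - 1) := by
      simpa using norm_one_sub_ofReal_mul_cpow_le (γ := -β - 1) (by linarith) ht.1 ht.2.le
        (hball z hz) hr
    rw [norm_mul, norm_mul, norm_mul, Complex.norm_real, Complex.norm_of_nonneg ht.1,
      Real.norm_of_nonneg hβ]
    calc ‖g t‖ * (β * t * ‖(1 - (t : ℂ) * z) ^ (-(β : ℂ) - 1)‖)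
        ≤ ‖g t‖ * (β * 1 * (1 - r) ^ (-β - 1)) := by gcongr; exact ht.2.le
      _ = ‖g t‖ * (β * (1 - r) ^ (-β - 1)) := by ring
  exact (hasDerivAt_integral_of_dominated_loc_of_deriv_le (Metric.ball_mem_nhds z₀ (by linarith))
    (Eventually.of_forall fun z => aestronglyMeasurable_div_one_sub_ofReal_mul_cpow
      hg.aestronglyMeasurable z _)
    (integrableOn_div_one_sub_ofReal_mul_cpow hβ hg hz₀) hderiv_meas
    (ae_restrict_of_forall_mem measurableSet_Ico hderiv_bound) (hg.norm.mul_const _)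
    (ae_restrict_of_forall_mem measurableSet_Ico fun t ht z hz =>
      hasDerivAt_div_one_sub_ofReal_mul_cpow ht.1 ht.2.le ((hball z hz).trans_lt hr) (g t))
    ).2.differentiableAt.differentiableWithinAt

end HilbertKernelIntegral

section Bloch

variable {ω : ℝ → ℝ} {f : ℂ → ℂ}

lemma tildeW_nonneg (hωpos : ∀ s ∈ Ico (0 : ℝ) 1, 0 < ω s) {t : ℝ} (ht : t ∈ Ico (0 : ℝ) 1) :
    0 ≤ tildeW ω t :=
  intervalIntegral.integral_nonneg ht.1 fun s hs =>
    (one_div_pos.2 (hωpos s ⟨hs.1, hs.2.trans_lt ht.2⟩)).le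

lemma norm_sub_le_mul_tildeW (hωpos : ∀ s ∈ Ico (0 : ℝ) 1, 0 < ω s)
    (hωcont : ContinuousOn ω (Ico 0 1)) (hf : DifferentiableOn ℂ f (Metric.ball 0 1)) {K : ℝ}
    (hK : ∀ s ∈ Ico (0 : ℝ) 1, ω s * ‖deriv f s‖ ≤ K) {t : ℝ} (ht : t ∈ Ico (0 : ℝ) 1) :
    ‖f t - f 0‖ ≤ K * tildeW ω t := by
  have hIcc : Icc 0 t ⊆ Ico (0 : ℝ) 1 := Icc_subset_Ico_right ht.2
  have hderiv : ∀ s ∈ uIcc 0 t, HasDerivAt (fun s : ℝ => f s) (deriv f s) s := by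
    rw [uIcc_of_le ht.1]
    exact fun s hs => (hf.differentiableAt
      (Metric.isOpen_ball.mem_nhds (ofReal_mem_ball_zero_one_s10 (hIcc hs)))).hasDerivAt.comp_ofReal
  have hderiv_cont : ContinuousOn (fun s : ℝ => deriv f s) (uIcc 0 t) := by
    rw [uIcc_of_le ht.1]
    exact (hf.deriv Metric.isOpen_ball).continuousOn.comp Complex.continuous_ofReal.continuousOn
      fun s hs => ofReal_mem_ball_zero_one_s10 (hIcc hs)
  have hinv_int : IntervalIntegrable (fun s => 1 / ω s) volume 0 t := by
    refine ContinuousOn.intervalIntegrable ?_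
    rw [uIcc_of_le ht.1]
    exact continuousOn_const.div (hωcont.mono hIcc) fun s hs => (hωpos s (hIcc hs)).ne'
  have hFTC := intervalIntegral.integral_eq_sub_of_hasDerivAt hderiv
    hderiv_cont.intervalIntegrable
  rw [Complex.ofReal_zero] at hFTC
  calc ‖f t - f 0‖ = ‖∫ s in (0 : ℝ)..t, deriv f s‖ := by rw [hFTC]
    _ ≤ ∫ s in (0 : ℝ)..t, K * (1 / ω s) :=
        intervalIntegral.norm_integral_le_of_norm_le ht.1 (Eventually.of_forall fun s hs => by
          have hs' := hIcc (Ioc_subset_Icc_self hs)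
          rw [mul_one_div, le_div_iff₀' (hωpos s hs')]
          exact hK s hs') (hinv_int.const_mul K)
    _ = K * tildeW ω t := intervalIntegral.integral_const_mul K _

lemma MemBloch.mul_norm_deriv_le (hf : MemBloch ω f) {z : ℂ} (hz : z ∈ Metric.ball (0 : ℂ) 1) :
    ω ‖z‖ * ‖deriv f z‖ ≤ blochNorm ω f - ‖f 0‖ := by
  rw [blochNorm, add_sub_cancel_left]
  exact le_ciSup hf.2 (⟨z, hz⟩ : Metric.ball (0 : ℂ) 1)

lemma norm_apply_zero_le_blochNorm (hωpos : ∀ s ∈ Ico (0 : ℝ) 1, 0 < ω s) (f : ℂ → ℂ) :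
    ‖f 0‖ ≤ blochNorm ω f :=
  le_add_of_nonneg_right <| Real.iSup_nonneg fun z =>
    mul_nonneg (hωpos _ ⟨norm_nonneg _, mem_ball_zero_iff.1 z.2⟩).le (norm_nonneg _)

variable (hωpos : ∀ s ∈ Ico (0 : ℝ) 1, 0 < ω s) (hωcont : ContinuousOn ω (Ico 0 1))
include hωpos hωcont

lemma MemBloch.norm_le_blochNorm_mul (hf : MemBloch ω f) {t : ℝ} (ht : t ∈ Ico (0 : ℝ) 1) :
    ‖f t‖ ≤ blochNorm ω f * (tildeW ω t + 1) := by
  have hsub : ‖f t - f 0‖ ≤ (blochNorm ω f - ‖f 0‖) * tildeW ω t :=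
    norm_sub_le_mul_tildeW hωpos hωcont hf.1 (fun s hs => by
      simpa only [Complex.norm_of_nonneg hs.1] using
        hf.mul_norm_deriv_le (ofReal_mem_ball_zero_one_s10 hs)) ht
  have hf₀ := norm_apply_zero_le_blochNorm hωpos f
  have hW := tildeW_nonneg hωpos ht
  calc ‖f t‖ ≤ ‖f 0‖ + ‖f t - f 0‖ := norm_le_norm_add_norm_sub' _ _
    _ ≤ ‖f 0‖ + (blochNorm ω f - ‖f 0‖) * tildeW ω t := by gcongr
    _ ≤ blochNorm ω f * (tildeW ω t + 1) := by nlinarith [norm_nonneg (f 0)]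

variable {μ : Measure ℝ} (hμ : Integrable (fun t => tildeW ω t + 1) (μ.restrict (Ico 0 1)))
include hμ

lemma MemBloch.integrableOn_comp_ofReal (hf : MemBloch ω f) :
    IntegrableOn (fun t : ℝ => f t) (Ico 0 1) μ :=
  (hμ.const_mul (blochNorm ω f)).mono'
    ((hf.1.continuousOn.comp Complex.continuous_ofReal.continuousOn
      fun _ ht => ofReal_mem_ball_zero_one_s10 ht).aestronglyMeasurable measurableSet_Ico)
    (ae_restrict_of_forall_mem measurableSet_Ico fun _ ht =>
      hf.norm_le_blochNorm_mul hωpos hωcont ht)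

lemma MemBloch.setIntegral_norm_le (hf : MemBloch ω f) :
    ∫ t in Ico (0 : ℝ) 1, ‖f t‖ ∂μ ≤
      blochNorm ω f * ∫ t in Ico (0 : ℝ) 1, (tildeW ω t + 1) ∂μ := by
  rw [← integral_const_mul]
  exact setIntegral_mono_on (hf.integrableOn_comp_ofReal hωpos hωcont hμ).norm
    (hμ.const_mul _) measurableSet_Ico fun _ ht => hf.norm_le_blochNorm_mul hωpos hωcont ht

end Bloch

theorem stmt10 (ω : ℝ → ℝ) (a b : ℝ) (hω : IsNormal ω a b) (μ : Measure ℝ) (α : ℝ)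
    (hα : -1 < α)
    (hμ : Integrable (fun t => tildeW ω t + 1) (μ.restrict (Ico 0 1))) :
    ∃ C > 0, ∀ f : ℂ → ℂ, MemBloch ω f →
      (∀ z ∈ Metric.ball (0:ℂ) 1,
          Integrable (fun t : ℝ => f (t : ℂ) / (1 - (t : ℂ) * z) ^ ((α : ℂ) + 1))
            (μ.restrict (Ico 0 1)))
      ∧ DifferentiableOn ℂ (intHilbert μ α f) (Metric.ball 0 1)
      ∧ ∀ r ∈ Ico (0:ℝ) 1, ∀ z : ℂ, ‖z‖ ≤ r →
          ‖intHilbert μ α f z‖ ≤ C * blochNorm ω f / (1 - r) ^ (α + 1) := by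
  obtain ⟨-, -, hωpos, hωcont, -, -⟩ := hω
  set M := ∫ t in Ico (0 : ℝ) 1, (tildeW ω t + 1) ∂μ
  have hM : 0 ≤ M := setIntegral_nonneg measurableSet_Ico fun t ht =>
    by linarith [tildeW_nonneg hωpos ht]
  have hβ : 0 ≤ α + 1 := by linarith
  have hexp : (α : ℂ) + 1 = ((α + 1 : ℝ) : ℂ) := by push_cast; rfl
  refine ⟨M + 1, by linarith, fun f hf => ?_⟩
  have hg := hf.integrableOn_comp_ofReal hωpos hωcont hμ
  have hI : intHilbert μ α f =
      fun z => ∫ t in Ico (0 : ℝ) 1, f t / (1 - (t : ℂ) * z) ^ ((α + 1 : ℝ) : ℂ) ∂μ := by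
    rw [← hexp]
    rfl
  rw [hI, hexp]
  refine ⟨fun z hz => integrableOn_div_one_sub_ofReal_mul_cpow hβ hg (mem_ball_zero_iff.1 hz),
    differentiableOn_setIntegral_div_one_sub_ofReal_mul_cpow hβ hg, fun r hr z hz => ?_⟩
  have hB := norm_apply_zero_le_blochNorm hωpos f
  calc _ ≤ (∫ t in Ico (0 : ℝ) 1, ‖f t‖ ∂μ) / (1 - r) ^ (α + 1) :=
        norm_setIntegral_div_one_sub_ofReal_mul_cpow_le hβ hg hz hr.2
    _ ≤ (M + 1) * blochNorm ω f / (1 - r) ^ (α + 1) := by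
        gcongr
        · exact Real.rpow_nonneg (sub_nonneg.2 hr.2.le) _
        · nlinarith [hf.setIntegral_norm_le hωpos hωcont hμ, norm_nonneg (f 0)]
end
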